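/- arXiv:0811.2250 — 10 statements merged into one kernel-verified Lean document; each statement's English description precedes it below -/
import Mathlib

section
/- In a simple probabilistic relation with tuples t_1,...,t_n sorted so that t_1 ≻ t_2 ≻ ... ≻ t_n (strictly decreasing scores), the Global-Topk probability q(k,i) of tuple t_i satisfies the recursion: q(0,i) = 0; q(k,i) = p(t_i) for 1 ≤ i ≤ k; and q(k,i) = (q(k,i−1)·(1−p(t_{i−1}))/p(t_{i−1}) + q(k−1,i−1))·p(t_i) otherwise. -/
/-!
Remove tuple `i` from the ground set: `q(k,i) = p i · r(k,i)`, where `r(k,i)` is the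
probability, over the worlds of the remaining tuples, that fewer than `k` tuples outscoring `i`
are present. Conditioning `r(k,i)` on tuple `i-1` gives
`r(k,i) = p (i-1) · r(k-1,i-1) + (1 - p (i-1)) · r(k,i-1)`, since tuple `i` does not affect the
count below `i-1`. Combined with `q(k,i-1) = p (i-1) · r(k,i-1)` and `p (i-1) > 0`, this is the
recursion.
-/

open Finset

namespace ProbRelation

section Worlds

variable {α R : Type*} [DecidableEq α] [CommRing R]

def worldWeight (p : α → R) (T W : Finset α) : R :=
  (∏ j ∈ W, p j) * ∏ j ∈ T \ W, (1 - p j)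

def worldProb (p : α → R) (T : Finset α) (c : Finset α → Prop) [DecidablePred c] : R :=
  ∑ W ∈ T.powerset.filter c, worldWeight p T W

variable (p : α → R) {T : Finset α} {a : α}

theorem worldProb_true (T : Finset α) : worldProb p T (fun _ => True) = 1 := by
  simp [worldProb, worldWeight, ← prod_add]

theorem worldProb_congr {c c' : Finset α → Prop} [DecidablePred c] [DecidablePred c']
    (h : ∀ W ⊆ T, c W ↔ c' W) : worldProb p T c = worldProb p T c' :=
  sum_congr (filter_congr fun W hW => h W (mem_powerset.mp hW)) fun _ _ => rfl

theorem worldWeight_insert_insert (ha : a ∉ T) {W : Finset α} (hW : W ⊆ T) :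
    worldWeight p (insert a T) (insert a W) = p a * worldWeight p T W := by
  rw [worldWeight, worldWeight, insert_sdiff_insert, sdiff_insert_of_notMem ha,
    prod_insert (fun h => ha (hW h))]
  ring

theorem worldWeight_insert (ha : a ∉ T) {W : Finset α} (hW : W ⊆ T) :
    worldWeight p (insert a T) W = (1 - p a) * worldWeight p T W := by
  rw [worldWeight, worldWeight, insert_sdiff_of_notMem _ (fun h => ha (hW h)),
    prod_insert (fun h => ha (mem_sdiff.mp h).1)]
  ring

theorem worldProb_insert (ha : a ∉ T) (c : Finset α → Prop) [DecidablePred c] :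
    worldProb p (insert a T) c =
      p a * worldProb p T (fun W => c (insert a W)) + (1 - p a) * worldProb p T c := by
  simp only [worldProb, sum_filter, sum_powerset_insert ha, mul_sum]
  rw [add_comm]
  congr 1 <;> refine sum_congr rfl fun W hW => ?_
  · rw [worldWeight_insert_insert p ha (mem_powerset.mp hW)]
    split_ifs <;> simp
  · rw [worldWeight_insert p ha (mem_powerset.mp hW)]
    split_ifs <;> simp

theorem worldProb_insert_of_forall_insert_iff (ha : a ∉ T) {c : Finset α → Prop}
    [DecidablePred c] (hc : ∀ W ⊆ T, c (insert a W) ↔ c W) :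
    worldProb p (insert a T) c = worldProb p T c := by
  rw [worldProb_insert p ha, worldProb_congr p hc]
  ring

theorem worldProb_insert_mem_and (ha : a ∉ T) (c : Finset α → Prop) [DecidablePred c] :
    worldProb p (insert a T) (fun W => a ∈ W ∧ c W) =
      p a * worldProb p T (fun W => c (insert a W)) := by
  have h_mem : ∀ W ⊆ T, (a ∈ insert a W ∧ c (insert a W)) ↔ c (insert a W) := by simp
  have h_notMem : ∀ W ⊆ T, (a ∈ W ∧ c W) ↔ False := fun W hW =>
    iff_false_intro fun h => ha (hW h.1)
  rw [worldProb_insert p ha, worldProb_congr p h_mem, worldProb_congr p h_notMem]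
  simp [worldProb]

end Worlds

section GlobalTopk

variable (p : ℕ → ℝ) {S : Finset ℕ}

theorem card_filter_lt_insert_self (i : ℕ) (V : Finset ℕ) :
    ((insert i V).filter (· < i)).card = (V.filter (· < i)).card := by
  simp [filter_insert]

theorem filter_lt_succ_of_notMem {a : ℕ} {V : Finset ℕ} (ha : a ∉ V) :
    V.filter (· < a + 1) = V.filter (· < a) :=
  filter_congr fun j hj => by
    have : j ≠ a := fun h => ha (h ▸ hj)
    omega

theorem card_filter_lt_le_of_subset_Icc {n i : ℕ} {V : Finset ℕ} (hV : V ⊆ Icc 1 n) :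
    (V.filter (· < i)).card ≤ i - 1 := by
  have hsub : V.filter (· < i) ⊆ Ico 1 i := fun j hj => by
    have := mem_Icc.mp (hV (mem_filter.mp hj).1)
    simp only [mem_filter, mem_Ico] at hj ⊢
    omega
  simpa using card_le_card hsub

theorem worldProb_card_filter_lt_eq_one {n i k : ℕ} {T : Finset ℕ} (hT : T ⊆ Icc 1 n)
    (hi : 1 ≤ i) (hik : i ≤ k) : worldProb p T (fun V => (V.filter (· < i)).card < k) = 1 := by
  have h_all : ∀ V ⊆ T, (V.filter (· < i)).card < k ↔ True := fun V hV =>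
    iff_true_intro ((card_filter_lt_le_of_subset_Icc (hV.trans hT)).trans_lt (by omega))
  rw [worldProb_congr p h_all, worldProb_true]

theorem worldProb_mem_and_card_filter_lt {T : Finset ℕ} {i : ℕ} (hi : i ∈ T) (k : ℕ) :
    worldProb p T (fun W => i ∈ W ∧ (W.filter (· < i)).card < k) =
      p i * worldProb p (T.erase i) (fun V => (V.filter (· < i)).card < k) := by
  have h := worldProb_insert_mem_and p (notMem_erase i T) (fun W => (W.filter (· < i)).card < k)
  simpa only [insert_erase hi, card_filter_lt_insert_self] using h

theorem worldProb_insert_card_filter_lt_succ {a k : ℕ} (ha : a ∉ S) (hk : 1 ≤ k) :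
    worldProb p (insert a S) (fun V => (V.filter (· < a + 1)).card < k) =
      p a * worldProb p S (fun V => (V.filter (· < a)).card < k - 1) +
        (1 - p a) * worldProb p S (fun V => (V.filter (· < a)).card < k) := by
  have hnot : ∀ V ⊆ S, a ∉ V := fun V hV h => ha (hV h)
  rw [worldProb_insert p ha]
  congr 2 <;> refine worldProb_congr p fun V hV => ?_
  · rw [filter_insert, if_pos (lt_add_one a), filter_lt_succ_of_notMem (hnot V hV),
      card_insert_of_notMem fun h => hnot V hV (mem_filter.mp h).1]
    omega
  · rw [filter_lt_succ_of_notMem (hnot V hV)]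

theorem worldProb_insert_succ_card_filter_lt {a k : ℕ} (ha : a + 1 ∉ S) :
    worldProb p (insert (a + 1) S) (fun V => (V.filter (· < a)).card < k) =
      worldProb p S (fun V => (V.filter (· < a)).card < k) :=
  worldProb_insert_of_forall_insert_iff p ha fun V _ => by simp [filter_insert]

end GlobalTopk

end ProbRelation

open ProbRelation in
/-- Recursion for Global-Topk probabilities in a simple probabilistic relation
with tuples `1, ..., n` sorted by strictly decreasing score. -/
theorem globalTopk_recursion (n : ℕ) (p : ℕ → ℝ)
    (hp : ∀ i ∈ Finset.Icc 1 n, p i ∈ Set.Ioc (0 : ℝ) 1)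
    (q : ℕ → ℕ → ℝ)
    (hq : ∀ k i, q k i =
      ∑ W ∈ (Finset.Icc 1 n).powerset.filter
          (fun W => i ∈ W ∧ (W.filter (fun j => j < i)).card < k),
        (∏ j ∈ W, p j) * ∏ j ∈ Finset.Icc 1 n \ W, (1 - p j)) :
    (∀ i ∈ Finset.Icc 1 n, q 0 i = 0) ∧
    (∀ k i, 1 ≤ i → i ≤ k → i ≤ n → q k i = p i) ∧
    (∀ k i, 1 ≤ k → k < i → i ≤ n →
      q k i = (q k (i - 1) * (1 - p (i - 1)) / p (i - 1) + q (k - 1) (i - 1)) * p i) := by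
  have hq' : ∀ k i, i ∈ Icc 1 n →
      q k i = p i * worldProb p ((Icc 1 n).erase i) (fun V => (V.filter (· < i)).card < k) :=
    fun k i hi => (hq k i).trans (worldProb_mem_and_card_filter_lt p hi k)
  refine ⟨fun i _ => by simp [hq], fun k i hi1 hik hin => ?_, fun k i hk hki hin => ?_⟩
  · rw [hq' k i (mem_Icc.mpr ⟨hi1, hin⟩),
      worldProb_card_filter_lt_eq_one p (erase_subset _ _) hi1 hik, mul_one]
  · obtain ⟨a, rfl⟩ : ∃ a, i = a + 1 := ⟨i - 1, by omega⟩
    have ha : a ∈ Icc 1 n := mem_Icc.mpr ⟨by omega, by omega⟩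
    have hsucc : a + 1 ∈ Icc 1 n := mem_Icc.mpr ⟨by omega, hin⟩
    have hpa : p a ≠ 0 := (hp a ha).1.ne'
    set S := ((Icc 1 n).erase (a + 1)).erase a
    have h_erase_succ : (Icc 1 n).erase (a + 1) = insert a S :=
      (insert_erase (mem_erase.mpr ⟨by omega, ha⟩)).symm
    have h_erase : (Icc 1 n).erase a = insert (a + 1) S := by
      rw [show S = ((Icc 1 n).erase a).erase (a + 1) from erase_right_comm,
        insert_erase (mem_erase.mpr ⟨by omega, hsucc⟩)]
    rw [Nat.add_sub_cancel, hq' k (a + 1) hsucc, hq' k a ha, hq' (k - 1) a ha, h_erase_succ,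
      h_erase, worldProb_insert_card_filter_lt_succ p (notMem_erase a _) hk,
      worldProb_insert_succ_card_filter_lt p (by simp [S]),
      worldProb_insert_succ_card_filter_lt p (by simp [S])]
    field_simp
    ring
end

section
/- In a simple probabilistic relation under an injective scoring function, Global-Topk satisfies Faithfulness: if p(t_1) > p(t_2) and t_1 has higher score than t_2 (i.e., the index of t_1 is smaller than that of t_2 in the score-sorted order), then the Global-Topk probability of t_1 is strictly greater than that of t_2, for any k ≥ 1. -/
open Finset

/-!
Replacing `i₂` by `i₁` in a possible world where `i₂` is present (and `i₁` absent) keeps at most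
as many tuples ahead of the distinguished one, since `i₁ < i₂`, and multiplies the world's weight
by `p i₁ (1 - p i₂) / (p i₂ (1 - p i₁)) > 1`. This exchange is injective on the worlds counted by
`q k i₂`, maps them into those counted by `q k i₁`, and is strict on the world `{i₂}`.
-/

theorem Finset.sum_lt_sum_of_mapsTo_of_injOn {ι M : Type*} [AddCommMonoid M] [PartialOrder M]
    [IsOrderedCancelAddMonoid M] {s t : Finset ι} {f : ι → M} {φ : ι → ι}
    (hmaps : Set.MapsTo φ s t) (hinj : Set.InjOn φ s) (hle : ∀ x ∈ s, f x ≤ f (φ x))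
    (hlt : ∃ x ∈ s, f x < f (φ x)) (hnonneg : ∀ y ∈ t, 0 ≤ f y) :
    ∑ x ∈ s, f x < ∑ y ∈ t, f y := by
  classical
  calc ∑ x ∈ s, f x
      < ∑ x ∈ s, f (φ x) := sum_lt_sum hle hlt
    _ = ∑ y ∈ s.image φ, f y := (sum_image hinj).symm
    _ ≤ ∑ y ∈ t, f y :=
        sum_le_sum_of_subset_of_nonneg (image_subset_iff.2 hmaps) fun y hy _ => hnonneg y hy

namespace GlobalTopk

section Exchange

variable {α : Type*} [DecidableEq α] {a b : α} {W : Finset α}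

def exchange (a b : α) (W : Finset α) : Finset α :=
  if a ∈ W then W else insert a (W.erase b)

lemma mem_exchange_self : a ∈ exchange a b W := by
  unfold exchange
  split_ifs with h
  exacts [h, mem_insert_self a _]

lemma exchange_subset_insert : exchange a b W ⊆ insert a W := by
  unfold exchange
  split_ifs
  exacts [subset_insert a W, insert_subset_insert a (erase_subset b W)]

lemma exchange_exchange (hab : a ≠ b) (hb : b ∈ W) : exchange b a (exchange a b W) = W := by
  by_cases ha : a ∈ W
  · simp only [exchange, if_pos ha, if_pos hb]
  · have hbV : b ∉ insert a (W.erase b) := by simp [Ne.symm hab]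
    have haW' : a ∉ W.erase b := fun h => ha (mem_of_mem_erase h)
    simp only [exchange, if_neg ha, if_neg hbV, erase_insert haW', insert_erase hb]

lemma injOn_exchange (hab : a ≠ b) : Set.InjOn (exchange a b) {W | b ∈ W} :=
  Set.LeftInvOn.injOn fun _ hW => exchange_exchange hab hW

end Exchange

section Weight

variable {α : Type*} [DecidableEq α] (I : Finset α) (p : α → ℝ) {a b : α} {W : Finset α}

/-- The probability of the possible world `W ⊆ I` when each `j ∈ I` is present independently
with probability `p j`. -/
def subsetWeight (W : Finset α) : ℝ :=
  (∏ j ∈ W, p j) * ∏ j ∈ I \ W, (1 - p j)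

variable {I p}

lemma subsetWeight_nonneg (hp : ∀ j ∈ I, p j ∈ Set.Icc 0 1) (hW : W ⊆ I) :
    0 ≤ subsetWeight I p W :=
  mul_nonneg (prod_nonneg fun j hj => (hp j (hW hj)).1)
    (prod_nonneg fun j hj => sub_nonneg.2 (hp j (mem_sdiff.1 hj).1).2)

lemma subsetWeight_insert_erase_sub (ha : a ∈ I) (haW : a ∉ W) (hb : b ∈ W) (hW : W ⊆ I) :
    subsetWeight I p (insert a (W.erase b)) - subsetWeight I p W =
      (p a - p b) * ((∏ j ∈ W.erase b, p j) * ∏ j ∈ (I \ W).erase a, (1 - p j)) := by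
  have hba : b ≠ a := fun h => haW (h ▸ hb)
  have hcompl : I \ insert a (W.erase b) = insert b ((I \ W).erase a) := by
    rw [sdiff_insert, sdiff_erase (hW hb), erase_insert_of_ne hba]
  have haW' : a ∉ W.erase b := fun h => haW (mem_of_mem_erase h)
  have hbc : b ∉ (I \ W).erase a := fun h => (mem_sdiff.1 (mem_of_mem_erase h)).2 hb
  unfold subsetWeight
  rw [hcompl, prod_insert haW', prod_insert hbc, ← mul_prod_erase W p hb,
    ← mul_prod_erase (I \ W) (fun j => 1 - p j) (mem_sdiff.2 ⟨ha, haW⟩)]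
  ring

lemma subsetWeight_lt_insert_erase (hp : ∀ j ∈ I, p j ∈ Set.Ioo 0 1) (ha : a ∈ I)
    (haW : a ∉ W) (hb : b ∈ W) (hW : W ⊆ I) (hpab : p b < p a) :
    subsetWeight I p W < subsetWeight I p (insert a (W.erase b)) := by
  have hrest : 0 < (∏ j ∈ W.erase b, p j) * ∏ j ∈ (I \ W).erase a, (1 - p j) :=
    mul_pos (prod_pos fun j hj => (hp j (hW (mem_of_mem_erase hj))).1)
      (prod_pos fun j hj => sub_pos.2 (hp j (mem_sdiff.1 (mem_of_mem_erase hj)).1).2)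
  have hsub := subsetWeight_insert_erase_sub ha haW hb hW (p := p)
  exact sub_pos.1 (hsub ▸ mul_pos (sub_pos.2 hpab) hrest)

lemma subsetWeight_le_exchange (hp : ∀ j ∈ I, p j ∈ Set.Ioo 0 1) (ha : a ∈ I) (hb : b ∈ W)
    (hW : W ⊆ I) (hpab : p b < p a) :
    subsetWeight I p W ≤ subsetWeight I p (exchange a b W) := by
  unfold exchange
  split_ifs with haW
  exacts [le_rfl, (subsetWeight_lt_insert_erase hp ha haW hb hW hpab).le]

end Weight

section TopK

variable {α : Type*} [LinearOrder α] {I : Finset α} {k : ℕ} {a b : α} {W : Finset α}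

def topkEvent (I : Finset α) (k : ℕ) (i : α) : Finset (Finset α) :=
  I.powerset.filter fun W => i ∈ W ∧ #(W.filter (· < i)) < k

lemma mem_topkEvent : W ∈ topkEvent I k b ↔ W ⊆ I ∧ b ∈ W ∧ #(W.filter (· < b)) < k := by
  simp only [topkEvent, mem_filter, mem_powerset]

lemma singleton_mem_topkEvent (hb : b ∈ I) (hk : 0 < k) : {b} ∈ topkEvent I k b := by
  simpa [mem_topkEvent, filter_singleton] using And.intro hb hk

lemma exchange_mem_topkEvent (ha : a ∈ I) (hab : a < b) (hW : W ∈ topkEvent I k b) :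
    exchange a b W ∈ topkEvent I k a := by
  obtain ⟨hWI, -, hcard⟩ := mem_topkEvent.1 hW
  have hahead : (exchange a b W).filter (· < a) ⊆ W.filter (· < b) := by
    refine (filter_subset_filter _ exchange_subset_insert).trans ?_
    rw [filter_insert, if_neg (lt_irrefl a)]
    exact fun j hj => mem_filter.2 ⟨(mem_filter.1 hj).1, (mem_filter.1 hj).2.trans hab⟩
  exact mem_topkEvent.2 ⟨exchange_subset_insert.trans (insert_subset ha hWI), mem_exchange_self,
    (card_le_card hahead).trans_lt hcard⟩

theorem sum_subsetWeight_topkEvent_lt (p : α → ℝ) (hp : ∀ j ∈ I, p j ∈ Set.Ioo 0 1)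
    (hk : 0 < k) (ha : a ∈ I) (hb : b ∈ I) (hab : a < b) (hpab : p b < p a) :
    ∑ W ∈ topkEvent I k b, subsetWeight I p W < ∑ W ∈ topkEvent I k a, subsetWeight I p W := by
  have hba : a ∉ ({b} : Finset α) := by simpa using hab.ne
  refine sum_lt_sum_of_mapsTo_of_injOn (φ := exchange a b)
    (fun W hW => exchange_mem_topkEvent ha hab hW)
    ((injOn_exchange hab.ne).mono fun W hW => (mem_topkEvent.1 hW).2.1)
    (fun W hW => subsetWeight_le_exchange hp ha (mem_topkEvent.1 hW).2.1 (mem_topkEvent.1 hW).1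
      hpab)
    ⟨{b}, singleton_mem_topkEvent hb hk, ?_⟩
    (fun W hW => subsetWeight_nonneg (fun j hj => Set.Ioo_subset_Icc_self (hp j hj))
      (mem_topkEvent.1 hW).1)
  rw [exchange, if_neg hba]
  exact subsetWeight_lt_insert_erase hp ha hba (mem_singleton_self b) (singleton_subset_iff.2 hb)
    hpab

end TopK

end GlobalTopk

open GlobalTopk in
/-- Faithfulness of Global-Topk in a simple probabilistic relation: if tuple `i1`
has a higher score (smaller index in the score-sorted order) and a higher
probability than tuple `i2`, then its Global-Topk probability is strictly larger. -/
theorem globalTopk_faithfulness (n : ℕ) (p : ℕ → ℝ)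
    (hp : ∀ i ∈ Finset.Icc 1 n, p i ∈ Set.Ioo (0 : ℝ) 1)
    (q : ℕ → ℕ → ℝ)
    (hq : ∀ k i, q k i =
      ∑ W ∈ (Finset.Icc 1 n).powerset.filter
          (fun W => i ∈ W ∧ (W.filter (fun j => j < i)).card < k),
        (∏ j ∈ W, p j) * ∏ j ∈ Finset.Icc 1 n \ W, (1 - p j))
    (k i1 i2 : ℕ) (hk : 1 ≤ k)
    (hi1 : i1 ∈ Finset.Icc 1 n) (hi2 : i2 ∈ Finset.Icc 1 n)
    (hscore : i1 < i2) (hprob : p i2 < p i1) :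
    q k i2 < q k i1 := by
  rw [hq, hq]
  exact sum_subsetWeight_topkEvent_lt p hp hk hi1 hi2 hscore hprob
end

section
/- In a simple probabilistic relation under an injective scoring function, the Global-Topk probability of any tuple t is monotone nondecreasing in p(t): if p'(t) > p(t) and p' agrees with p on all other tuples, then P'_k(t) = (p'(t)/p(t)) · P_k(t), hence P'_k(t) ≥ P_k(t). -/
open Finset

section WorldProb

variable {α : Type*} [DecidableEq α]

/-- Probability of the possible world `W ⊆ s` when the tuples of `s` are independent and
present with probabilities `f`. -/
def worldProb (s : Finset α) (f : α → ℝ) (W : Finset α) : ℝ :=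
  (∏ j ∈ W, f j) * ∏ j ∈ s \ W, (1 - f j)

lemma worldProb_nonneg {s W : Finset α} {f : α → ℝ} (hf : ∀ j ∈ s, f j ∈ Set.Icc (0 : ℝ) 1)
    (hW : W ⊆ s) : 0 ≤ worldProb s f W := by
  refine mul_nonneg (prod_nonneg fun j hj => (hf j (hW hj)).1) (prod_nonneg fun j hj => ?_)
  exact sub_nonneg.mpr (hf j (mem_sdiff.mp hj).1).2

/-- Only the factor of `t` changes: it lies in `W`, so it contributes `f t`, never `1 - f t`. -/
lemma worldProb_eq_div_mul_of_eqOn {s W : Finset α} {f f' : α → ℝ} {t : α} (htW : t ∈ W)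
    (hagree : ∀ j, j ≠ t → f' j = f j) (ht : f t ≠ 0) :
    worldProb s f' W = f' t / f t * worldProb s f W := by
  have hcompl : ∏ j ∈ s \ W, (1 - f' j) = ∏ j ∈ s \ W, (1 - f j) :=
    prod_congr rfl fun j hj => by
      rw [hagree j fun hjt => (mem_sdiff.mp hj).2 (hjt ▸ htW)]
  have herase : ∏ j ∈ W.erase t, f' j = ∏ j ∈ W.erase t, f j :=
    prod_congr rfl fun j hj => hagree j (ne_of_mem_erase hj)
  rw [worldProb, worldProb, hcompl, ← mul_prod_erase W f' htW, ← mul_prod_erase W f htW, herase]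
  field_simp

lemma sum_worldProb_eq_div_mul_of_eqOn {s : Finset α} {𝒲 : Finset (Finset α)} {f f' : α → ℝ}
    {t : α} (ht𝒲 : ∀ W ∈ 𝒲, t ∈ W) (hagree : ∀ j, j ≠ t → f' j = f j) (ht : f t ≠ 0) :
    ∑ W ∈ 𝒲, worldProb s f' W = f' t / f t * ∑ W ∈ 𝒲, worldProb s f W := by
  rw [mul_sum]
  exact sum_congr rfl fun W hW => worldProb_eq_div_mul_of_eqOn (ht𝒲 W hW) hagree ht

end WorldProb

theorem globalTopk_monotone_in_prob_general (n : ℕ) (p p' : ℕ → ℝ) (t0 : ℕ)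
    (ht0 : t0 ∈ Finset.Icc 1 n)
    (hp : ∀ i ∈ Finset.Icc 1 n, p i ∈ Set.Ioc (0 : ℝ) 1)
    (hraise : p t0 < p' t0)
    (hagree : ∀ j, j ≠ t0 → p' j = p j)
    (q : (ℕ → ℝ) → ℕ → ℕ → ℝ)
    (hq : ∀ f k i, q f k i =
      ∑ W ∈ (Finset.Icc 1 n).powerset.filter
          (fun W => i ∈ W ∧ (W.filter (fun j => j < i)).card < k),
        (∏ j ∈ W, f j) * ∏ j ∈ Finset.Icc 1 n \ W, (1 - f j))
    (k : ℕ) :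
    q p' k t0 = (p' t0 / p t0) * q p k t0 ∧ q p k t0 ≤ q p' k t0 := by
  have hpos : 0 < p t0 := (hp t0 ht0).1
  have hscale : q p' k t0 = p' t0 / p t0 * q p k t0 := by
    rw [hq, hq]
    exact sum_worldProb_eq_div_mul_of_eqOn (fun W hW => (mem_filter.mp hW).2.1) hagree hpos.ne'
  have hnonneg : 0 ≤ q p k t0 := by
    rw [hq]
    exact sum_nonneg fun W hW => worldProb_nonneg (fun j hj => Set.Ioc_subset_Icc_self (hp j hj))
      (mem_powerset.mp (mem_filter.mp hW).1)
  refine ⟨hscale, ?_⟩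
  rw [hscale]
  exact le_mul_of_one_le_left hnonneg ((one_le_div hpos).mpr hraise.le)

/-- Monotonicity of the Global-Topk probability of a tuple in its own probability:
raising `p t₀` to `p' t₀` scales its Global-Topk probability by `p' t₀ / p t₀`,
hence does not decrease it. -/
theorem globalTopk_monotone_in_prob (n : ℕ) (p p' : ℕ → ℝ) (t0 : ℕ)
    (ht0 : t0 ∈ Finset.Icc 1 n)
    (hp : ∀ i ∈ Finset.Icc 1 n, p i ∈ Set.Ioc (0 : ℝ) 1)
    (hp' : ∀ i ∈ Finset.Icc 1 n, p' i ∈ Set.Ioc (0 : ℝ) 1)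
    (hraise : p t0 < p' t0)
    (hagree : ∀ j, j ≠ t0 → p' j = p j)
    (q : (ℕ → ℝ) → ℕ → ℕ → ℝ)
    (hq : ∀ f k i, q f k i =
      ∑ W ∈ (Finset.Icc 1 n).powerset.filter
          (fun W => i ∈ W ∧ (W.filter (fun j => j < i)).card < k),
        (∏ j ∈ W, f j) * ∏ j ∈ Finset.Icc 1 n \ W, (1 - f j))
    (k : ℕ) :
    q p' k t0 = (p' t0 / p t0) * q p k t0 ∧ q p k t0 ≤ q p' k t0 :=
  globalTopk_monotone_in_prob_general n p p' t0 ht0 hp hraise hagree q hq k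
end

section
/- In a simple probabilistic relation under an injective scoring function, raising the probability of a tuple t to p'(t) > p(t) scales any other tuple's Global-Topk probability by a factor of at most p'(t)/p(t): for all t' ≠ t, P'_k(t') ≤ (p'(t)/p(t)) · P_k(t'). Combined with P'_k(t) = (p'(t)/p(t))·P_k(t), this implies that a winner (a tuple among the k largest Global-Topk probabilities) remains a winner after raising its probability (Stability for probability increase). -/
open Finset

namespace GlobalTopk

section Worlds

variable {α : Type*} [DecidableEq α] {s W : Finset α} {f f' : α → ℝ} {a : α}

def worldProb (s : Finset α) (f : α → ℝ) (W : Finset α) : ℝ :=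
  (∏ j ∈ W, f j) * ∏ j ∈ s \ W, (1 - f j)

theorem worldProb_nonneg (hf : ∀ i ∈ s, f i ∈ Set.Icc (0 : ℝ) 1) (hW : W ⊆ s) :
    0 ≤ worldProb s f W :=
  mul_nonneg (prod_nonneg fun j hj => (hf j (hW hj)).1)
    (prod_nonneg fun j hj => sub_nonneg.2 (hf j (mem_sdiff.1 hj).1).2)

theorem worldProb_of_mem (hagree : ∀ j, j ≠ a → f' j = f j) (ha : a ∈ W) :
    f a * worldProb s f' W = f' a * worldProb s f W := by
  have hin : ∏ j ∈ W.erase a, f' j = ∏ j ∈ W.erase a, f j :=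
    prod_congr rfl fun j hj => hagree j (ne_of_mem_erase hj)
  have hout : ∏ j ∈ s \ W, (1 - f' j) = ∏ j ∈ s \ W, (1 - f j) :=
    prod_congr rfl fun j hj => by
      rw [hagree j (ne_of_mem_of_not_mem ha (mem_sdiff.1 hj).2).symm]
  rw [worldProb, worldProb, ← mul_prod_erase W f' ha, ← mul_prod_erase W f ha, hin, hout]
  ring

theorem worldProb_of_not_mem (hagree : ∀ j, j ≠ a → f' j = f j) (ha : a ∈ s) (haW : a ∉ W) :
    (1 - f a) * worldProb s f' W = (1 - f' a) * worldProb s f W := by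
  have haout : a ∈ s \ W := mem_sdiff.2 ⟨ha, haW⟩
  have hin : ∏ j ∈ W, f' j = ∏ j ∈ W, f j :=
    prod_congr rfl fun j hj => hagree j (ne_of_mem_of_not_mem hj haW)
  have hout : ∏ j ∈ (s \ W).erase a, (1 - f' j) = ∏ j ∈ (s \ W).erase a, (1 - f j) :=
    prod_congr rfl fun j hj => by rw [hagree j (ne_of_mem_erase hj)]
  rw [worldProb, worldProb, ← mul_prod_erase _ (fun j => 1 - f' j) haout,
    ← mul_prod_erase _ (fun j => 1 - f j) haout, hin, hout]
  ring

/-- Raising the probability of `a` multiplies the worlds containing `a` by exactly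
`f' a / f a ≥ 1` and the others by `(1 - f' a) / (1 - f a) ≤ 1`. -/
theorem worldProb_le_div_mul (hf : ∀ i ∈ s, f i ∈ Set.Ioo (0 : ℝ) 1)
    (hagree : ∀ j, j ≠ a → f' j = f j) (ha : a ∈ s) (hlt : f a < f' a) (hW : W ⊆ s) :
    worldProb s f' W ≤ f' a / f a * worldProb s f W := by
  obtain ⟨hfa0, hfa1⟩ := hf a ha
  by_cases haW : a ∈ W
  · rw [div_mul_eq_mul_div, le_div_iff₀ hfa0, mul_comm, worldProb_of_mem hagree haW]
  · have hnn := worldProb_nonneg (fun i hi => Set.Ioo_subset_Icc_self (hf i hi)) hW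
    have hdecr : worldProb s f' W ≤ worldProb s f W := by
      refine le_of_mul_le_mul_left ?_ (sub_pos.2 hfa1)
      rw [worldProb_of_not_mem hagree ha haW]
      exact mul_le_mul_of_nonneg_right (by linarith) hnn
    exact hdecr.trans (le_mul_of_one_le_left hnn ((one_le_div hfa0).2 hlt.le))

end Worlds

section Topk

variable {α : Type*} [LinearOrder α] {s : Finset α} {f f' : α → ℝ} {a : α}

def globalTopk (s : Finset α) (f : α → ℝ) (k : ℕ) (i : α) : ℝ :=
  ∑ W ∈ s.powerset.filter (fun W => i ∈ W ∧ #(W.filter (· < i)) < k), worldProb s f W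

theorem globalTopk_le_div_mul (hf : ∀ i ∈ s, f i ∈ Set.Ioo (0 : ℝ) 1)
    (hagree : ∀ j, j ≠ a → f' j = f j) (ha : a ∈ s) (hlt : f a < f' a) (k : ℕ) (i : α) :
    globalTopk s f' k i ≤ f' a / f a * globalTopk s f k i := by
  rw [globalTopk, globalTopk, mul_sum]
  exact sum_le_sum fun W hW =>
    worldProb_le_div_mul hf hagree ha hlt (mem_powerset.1 (mem_filter.1 hW).1)

theorem globalTopk_self (hagree : ∀ j, j ≠ a → f' j = f j) (hfa : f a ≠ 0) (k : ℕ) :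
    globalTopk s f' k a = f' a / f a * globalTopk s f k a := by
  rw [globalTopk, globalTopk, mul_sum]
  refine sum_congr rfl fun W hW => ?_
  rw [div_mul_eq_mul_div, eq_div_iff hfa, mul_comm,
    worldProb_of_mem hagree (mem_filter.1 hW).2.1]

end Topk

theorem card_filter_lt_le_of_scaling {α : Type*} {s : Finset α} {Q Q' : α → ℝ} {a : α} {c : ℝ}
    (hc : 0 < c) (hself : Q' a = c * Q a) (hle : ∀ i ∈ s, Q' i ≤ c * Q i) :
    #(s.filter fun i => Q' a < Q' i) ≤ #(s.filter fun i => Q a < Q i) :=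
  card_le_card fun i hi => by
    simp only [mem_filter] at hi ⊢
    exact ⟨hi.1, lt_of_mul_lt_mul_left (hself ▸ hi.2.trans_le (hle i hi.1)) hc.le⟩

end GlobalTopk

open GlobalTopk in
theorem globalTopk_stability_prob_increase_general (n : ℕ) (p p' : ℕ → ℝ) (t0 : ℕ)
    (ht0 : t0 ∈ Finset.Icc 1 n)
    (hp : ∀ i ∈ Finset.Icc 1 n, p i ∈ Set.Ioo (0 : ℝ) 1)
    (hraise : p t0 < p' t0)
    (hagree : ∀ j, j ≠ t0 → p' j = p j)
    (q : (ℕ → ℝ) → ℕ → ℕ → ℝ)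
    (hq : ∀ f k i, q f k i =
      ∑ W ∈ (Finset.Icc 1 n).powerset.filter
          (fun W => i ∈ W ∧ (W.filter (fun j => j < i)).card < k),
        (∏ j ∈ W, f j) * ∏ j ∈ Finset.Icc 1 n \ W, (1 - f j))
    (k : ℕ) :
    (∀ t' ∈ Finset.Icc 1 n, t' ≠ t0 → q p' k t' ≤ (p' t0 / p t0) * q p k t') ∧
    (((Finset.Icc 1 n).filter (fun t'' => q p k t0 < q p k t'')).card < k →
      ((Finset.Icc 1 n).filter (fun t'' => q p' k t0 < q p' k t'')).card < k) := by
  obtain rfl : q = globalTopk (Icc 1 n) := by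
    funext f k i
    exact hq f k i
  have hpt0 : 0 < p t0 := (hp t0 ht0).1
  have hbound := globalTopk_le_div_mul hp hagree ht0 hraise k
  refine ⟨fun t' _ _ => hbound t', fun hwinner => lt_of_le_of_lt ?_ hwinner⟩
  exact card_filter_lt_le_of_scaling (div_pos (hpt0.trans hraise) hpt0)
    (globalTopk_self hagree hpt0.ne' k) fun i _ => hbound i

/-- Raising the probability of a tuple `t₀` scales any other tuple's Global-Topk
probability by a factor of at most `p' t₀ / p t₀`; together with the exact
scaling of `t₀`'s own Global-Topk probability this implies that a winner
(a tuple among the `k` largest Global-Topk probabilities) remains a winner. -/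
theorem globalTopk_stability_prob_increase (n : ℕ) (p p' : ℕ → ℝ) (t0 : ℕ)
    (ht0 : t0 ∈ Finset.Icc 1 n)
    (hp : ∀ i ∈ Finset.Icc 1 n, p i ∈ Set.Ioo (0 : ℝ) 1)
    (hp' : ∀ i ∈ Finset.Icc 1 n, p' i ∈ Set.Ioo (0 : ℝ) 1)
    (hraise : p t0 < p' t0)
    (hagree : ∀ j, j ≠ t0 → p' j = p j)
    (q : (ℕ → ℝ) → ℕ → ℕ → ℝ)
    (hq : ∀ f k i, q f k i =
      ∑ W ∈ (Finset.Icc 1 n).powerset.filter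
          (fun W => i ∈ W ∧ (W.filter (fun j => j < i)).card < k),
        (∏ j ∈ W, f j) * ∏ j ∈ Finset.Icc 1 n \ W, (1 - f j))
    (k : ℕ) :
    (∀ t' ∈ Finset.Icc 1 n, t' ≠ t0 → q p' k t' ≤ (p' t0 / p t0) * q p k t') ∧
    (((Finset.Icc 1 n).filter (fun t'' => q p k t0 < q p k t'')).card < k →
      ((Finset.Icc 1 n).filter (fun t'' => q p' k t0 < q p' k t'')).card < k) :=
  globalTopk_stability_prob_increase_general n p p' t0 ht0 hp hraise hagree q hq k
end

section
/- Decomposition of Global-Topk probability under a general (weak-order) scoring function in a simple probabilistic relation: for tuple t_l, P_k(t_l) = Σ_{k'=0}^{k−1} T_{k'} · Q_{k−k'}(t_l), where T_{k'} is the probability that exactly k' of the tuples strictly better than t_l are present, and Q_{k−k'}(t_l) is the Global-Top(k−k') probability of t_l restricted to the sub-relation of tuples tying with t_l (with Equal allocation). -/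
open Finset

lemma sum_powerset_union_disj {α : Type*} [DecidableEq α] (u v : Finset α)
    (h : Disjoint u v) (g : Finset α → Finset α → ℝ) :
    ∑ W ∈ (u ∪ v).powerset, g (W ∩ u) (W ∩ v)
      = ∑ A ∈ u.powerset, ∑ C ∈ v.powerset, g A C := by
  rw [← Finset.sum_product']
  refine Finset.sum_nbij' (fun W => (W ∩ u, W ∩ v)) (fun P => P.1 ∪ P.2) ?_ ?_ ?_ ?_ ?_
  · intro W hW
    simp [Finset.mem_product, Finset.inter_subset_right]
  · intro P hP
    simp only [Finset.mem_product, Finset.mem_powerset] at hP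
    exact Finset.mem_powerset.2 (Finset.union_subset_union hP.1 hP.2)
  · intro W hW
    simp only [Finset.mem_powerset] at hW
    show W ∩ u ∪ W ∩ v = W
    rw [← Finset.inter_union_distrib_left]
    exact Finset.inter_eq_left.2 hW
  · intro P hP
    simp only [Finset.mem_product, Finset.mem_powerset] at hP
    obtain ⟨h1, h2⟩ := hP
    have e1 : (P.1 ∪ P.2) ∩ u = P.1 := by
      ext a
      simp only [Finset.mem_inter, Finset.mem_union]
      constructor
      · rintro ⟨ha | ha, hu⟩
        · exact ha
        · exact absurd hu (Finset.disjoint_right.1 h (h2 ha))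
      · exact fun ha => ⟨Or.inl ha, h1 ha⟩
    have e2 : (P.1 ∪ P.2) ∩ v = P.2 := by
      ext a
      simp only [Finset.mem_inter, Finset.mem_union]
      constructor
      · rintro ⟨ha | ha, hv⟩
        · exact absurd (h1 ha) (Finset.disjoint_left.1 h · hv)
        · exact ha
      · exact fun ha => ⟨Or.inr ha, h2 ha⟩
    show ((P.1 ∪ P.2) ∩ u, (P.1 ∪ P.2) ∩ v) = P
    rw [e1, e2]
  · intro W hW; rfl

/-- Decomposition of the Global-Topk probability (Equal allocation) of a tuple
`tl` under a general weak-order scoring function in a simple probabilistic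
relation: `P_k(tl) = Σ_{k'=0}^{k-1} T_{k'} · Q_{k-k'}(tl)`, where `T_{k'}` is
the probability that exactly `k'` of the tuples strictly better than `tl` are
present, and `Q_m(tl)` is the Global-Top-m probability of `tl` restricted to
the sub-relation of tuples tying with `tl`. -/
theorem globalTopk_weak_order_decomposition {α : Type*} [DecidableEq α]
    (R : Finset α) (p s : α → ℝ)
    (hp : ∀ t ∈ R, p t ∈ Set.Ioc (0 : ℝ) 1)
    (tl : α) (htl : tl ∈ R) (k : ℕ)
    (T : ℕ → ℝ)
    (hT : ∀ k', T k' =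
      ∑ W ∈ (R.filter (fun t => s tl < s t)).powerset.filter (fun W => W.card = k'),
        (∏ t ∈ W, p t) * ∏ t ∈ R.filter (fun t => s tl < s t) \ W, (1 - p t))
    (Q : ℕ → ℝ)
    (hQ : ∀ m', Q m' =
      ∑ W ∈ (R.filter (fun t => s t = s tl)).powerset.filter (fun W => tl ∈ W),
        min 1 ((m' : ℝ) / W.card) *
          ((∏ t ∈ W, p t) * ∏ t ∈ R.filter (fun t => s t = s tl) \ W, (1 - p t))) :
    (∑ W ∈ R.powerset.filter (fun W =>
        tl ∈ W ∧ (W.filter (fun t => s tl < s t)).card < k),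
      min 1 (((k : ℝ) - (W.filter (fun t => s tl < s t)).card) /
          (W.filter (fun t => s t = s tl)).card) *
        ((∏ t ∈ W, p t) * ∏ t ∈ R \ W, (1 - p t)))
    = ∑ k' ∈ Finset.range k, T k' * Q (k - k') := by
  classical
  set B : Finset α := R.filter (fun t => s tl < s t) with hB
  set E : Finset α := R.filter (fun t => s t = s tl) with hE
  set F : Finset α := R \ (B ∪ E) with hF
  have htlE : tl ∈ E := by simp [hE, htl]
  have hBE : Disjoint B E := by
    rw [Finset.disjoint_left]
    intro a ha hae
    rw [hB, Finset.mem_filter] at ha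
    rw [hE, Finset.mem_filter] at hae
    exact absurd ha.2 (by rw [hae.2]; exact lt_irrefl _)
  have hBEsub : B ∪ E ⊆ R :=
    Finset.union_subset (Finset.filter_subset _ _) (Finset.filter_subset _ _)
  have hBEF : Disjoint (B ∪ E) F := Finset.disjoint_sdiff
  have hBF : Disjoint B F := Finset.disjoint_of_subset_left Finset.subset_union_left hBEF
  have hEF : Disjoint E F := Finset.disjoint_of_subset_left Finset.subset_union_right hBEF
  have hRsplit : (B ∪ E) ∪ F = R := Finset.union_sdiff_of_subset hBEsub
  have dint : ∀ (u v x y : Finset α), Disjoint x y → Disjoint (u ∩ x) (v ∩ y) := by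
    intro u v x y h
    exact Finset.disjoint_of_subset_left Finset.inter_subset_right
      (Finset.disjoint_of_subset_right Finset.inter_subset_right h)
  set wB : Finset α → ℝ := fun A => (∏ t ∈ A, p t) * ∏ t ∈ B \ A, (1 - p t) with hwB
  set wE : Finset α → ℝ := fun C => (∏ t ∈ C, p t) * ∏ t ∈ E \ C, (1 - p t) with hwE
  set wF : Finset α → ℝ := fun D => (∏ t ∈ D, p t) * ∏ t ∈ F \ D, (1 - p t) with hwF
  set G : Finset α → Finset α → Finset α → ℝ := fun A C D =>
    (if tl ∈ C ∧ A.card < k then min 1 (((k : ℝ) - A.card) / C.card) else 0) *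
      (wB A * (wE C * wF D)) with hG
  -- Step 1: rewrite the LHS as a sum of G over all subsets of R
  have step1 : (∑ W ∈ R.powerset.filter (fun W =>
        tl ∈ W ∧ (W.filter (fun t => s tl < s t)).card < k),
      min 1 (((k : ℝ) - (W.filter (fun t => s tl < s t)).card) /
          (W.filter (fun t => s t = s tl)).card) *
        ((∏ t ∈ W, p t) * ∏ t ∈ R \ W, (1 - p t)))
      = ∑ W ∈ R.powerset, G (W ∩ B) (W ∩ E) (W ∩ F) := by
    rw [Finset.sum_filter]
    refine Finset.sum_congr rfl fun W hW => ?_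
    rw [Finset.mem_powerset] at hW
    have hWB : W.filter (fun t => s tl < s t) = W ∩ B := by
      ext a
      simp only [Finset.mem_filter, Finset.mem_inter, hB]
      exact ⟨fun ⟨h1, h2⟩ => ⟨h1, hW h1, h2⟩, fun ⟨h1, _, h2⟩ => ⟨h1, h2⟩⟩
    have hWE : W.filter (fun t => s t = s tl) = W ∩ E := by
      ext a
      simp only [Finset.mem_filter, Finset.mem_inter, hE]
      exact ⟨fun ⟨h1, h2⟩ => ⟨h1, hW h1, h2⟩, fun ⟨h1, _, h2⟩ => ⟨h1, h2⟩⟩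
    have hcond : tl ∈ W ↔ tl ∈ W ∩ E := by
      simp [Finset.mem_inter, htlE]
    have hd3 : Disjoint (W ∩ E) (W ∩ F) := dint _ _ _ _ hEF
    have hd4 : Disjoint (W ∩ B) ((W ∩ E) ∪ (W ∩ F)) :=
      Finset.disjoint_union_right.2 ⟨dint _ _ _ _ hBE, dint _ _ _ _ hBF⟩
    have hWsplit : (W ∩ B) ∪ ((W ∩ E) ∪ (W ∩ F)) = W := by
      rw [← Finset.inter_union_distrib_left, ← Finset.inter_union_distrib_left,
        ← Finset.union_assoc, hRsplit]
      exact Finset.inter_eq_left.2 hW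
    have hprodW : (∏ t ∈ W, p t)
        = (∏ t ∈ W ∩ B, p t) * ((∏ t ∈ W ∩ E, p t) * ∏ t ∈ W ∩ F, p t) := by
      conv_lhs => rw [← hWsplit]
      rw [Finset.prod_union hd4, Finset.prod_union hd3]
    have hsd : ∀ X : Finset α, X \ (W ∩ X) = X \ W := by
      intro X
      ext a
      simp only [Finset.mem_sdiff, Finset.mem_inter]
      tauto
    have hRW : R \ W = (B \ W) ∪ ((E \ W) ∪ (F \ W)) := by
      rw [← hRsplit, Finset.union_sdiff_distrib, Finset.union_sdiff_distrib,
        Finset.union_assoc]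
    have hd5 : Disjoint (E \ W) (F \ W) :=
      Finset.disjoint_of_subset_left (Finset.sdiff_subset)
        (Finset.disjoint_of_subset_right (Finset.sdiff_subset) hEF)
    have hd6 : Disjoint (B \ W) ((E \ W) ∪ (F \ W)) := by
      refine Finset.disjoint_union_right.2 ⟨?_, ?_⟩
      · exact Finset.disjoint_of_subset_left (Finset.sdiff_subset)
          (Finset.disjoint_of_subset_right (Finset.sdiff_subset) hBE)
      · exact Finset.disjoint_of_subset_left (Finset.sdiff_subset)
          (Finset.disjoint_of_subset_right (Finset.sdiff_subset) hBF)
    have hprodR : (∏ t ∈ R \ W, (1 - p t))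
        = (∏ t ∈ B \ (W ∩ B), (1 - p t)) *
            ((∏ t ∈ E \ (W ∩ E), (1 - p t)) * ∏ t ∈ F \ (W ∩ F), (1 - p t)) := by
      rw [hsd B, hsd E, hsd F, hRW, Finset.prod_union hd6, Finset.prod_union hd5]
    simp only [hG]
    by_cases hc : tl ∈ W ∧ (W.filter (fun t => s tl < s t)).card < k
    · rw [if_pos hc, if_pos ⟨hcond.1 hc.1, by rw [← hWB]; exact hc.2⟩]
      rw [hWB, hWE, hprodW, hprodR]
      simp only [hwB, hwE, hwF]
      ring
    · rw [if_neg hc, if_neg (by rw [← hcond, ← hWB]; exact hc)]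
      simp
  rw [step1]
  -- Step 2: decompose the sum over subsets of R into triple sums
  have step2 : (∑ W ∈ R.powerset, G (W ∩ B) (W ∩ E) (W ∩ F))
      = ∑ A ∈ B.powerset, ∑ C ∈ E.powerset, ∑ D ∈ F.powerset, G A C D := by
    rw [← hRsplit]
    calc ∑ W ∈ ((B ∪ E) ∪ F).powerset, G (W ∩ B) (W ∩ E) (W ∩ F)
        = ∑ W ∈ ((B ∪ E) ∪ F).powerset,
            (fun X D => G (X ∩ B) (X ∩ E) D) (W ∩ (B ∪ E)) (W ∩ F) := by
          refine Finset.sum_congr rfl fun W _ => ?_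
          simp only
          rw [Finset.inter_assoc, Finset.union_inter_cancel_left,
            Finset.inter_assoc, Finset.union_inter_cancel_right]
      _ = ∑ X ∈ (B ∪ E).powerset, ∑ D ∈ F.powerset, G (X ∩ B) (X ∩ E) D :=
          sum_powerset_union_disj (B ∪ E) F hBEF (fun X D => G (X ∩ B) (X ∩ E) D)
      _ = ∑ A ∈ B.powerset, ∑ C ∈ E.powerset, ∑ D ∈ F.powerset, G A C D := by
          exact sum_powerset_union_disj B E hBE (fun A C => ∑ D ∈ F.powerset, G A C D)
  rw [step2]
  -- Step 3: the sum over D of wF is 1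
  have hsumF : ∑ D ∈ F.powerset, wF D = 1 := by
    have h1 : ∏ t ∈ F, (p t + (1 - p t)) = ∑ D ∈ F.powerset,
        (∏ t ∈ D, p t) * ∏ t ∈ F \ D, (1 - p t) := Finset.prod_add _ _ _
    have h2 : ∏ t ∈ F, (p t + (1 - p t)) = 1 := by
      refine Finset.prod_eq_one fun t _ => by ring
    simp only [hwF]
    rw [← h1, h2]
  have step3 : ∀ A C, (∑ D ∈ F.powerset, G A C D)
      = (if tl ∈ C ∧ A.card < k then min 1 (((k : ℝ) - A.card) / C.card) else 0) *
          (wB A * wE C) := by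
    intro A C
    simp only [hG]
    rw [← Finset.mul_sum, ← Finset.mul_sum, ← Finset.mul_sum, hsumF, mul_one]
  simp only [step3]
  -- Step 4: inner sum over C
  have step4 : ∀ A : Finset α, (∑ C ∈ E.powerset,
      (if tl ∈ C ∧ A.card < k then min 1 (((k : ℝ) - A.card) / C.card) else 0) *
        (wB A * wE C))
      = if A.card < k then
          wB A * ∑ C ∈ E.powerset.filter (fun C => tl ∈ C),
            min 1 (((k : ℝ) - A.card) / C.card) * wE C
        else 0 := by
    intro A
    by_cases hA : A.card < k
    · rw [if_pos hA, Finset.mul_sum, Finset.sum_filter]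
      refine Finset.sum_congr rfl fun C _ => ?_
      by_cases htc : tl ∈ C
      · rw [if_pos ⟨htc, hA⟩, if_pos htc]
        ring
      · rw [if_neg (fun h => htc h.1), if_neg htc, zero_mul]
    · rw [if_neg hA]
      refine Finset.sum_eq_zero fun C _ => ?_
      rw [if_neg (fun h => hA h.2), zero_mul]
  simp only [step4]
  -- Step 5: group the A-sum by cardinality
  have step5 : (∑ A ∈ B.powerset, if A.card < k then
        wB A * ∑ C ∈ E.powerset.filter (fun C => tl ∈ C),
          min 1 (((k : ℝ) - A.card) / C.card) * wE C
      else 0)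
      = ∑ k' ∈ Finset.range k, ∑ A ∈ B.powerset.filter (fun A => A.card = k'),
          wB A * ∑ C ∈ E.powerset.filter (fun C => tl ∈ C),
            min 1 (((k : ℝ) - A.card) / C.card) * wE C := by
    rw [← Finset.sum_filter]
    rw [show B.powerset.filter (fun A => A.card < k)
        = B.powerset.filter (fun A => A.card ∈ Finset.range k) from by simp]
    exact (Finset.sum_fiberwise_eq_sum_filter B.powerset (Finset.range k)
      (fun A => A.card) _).symm
  rw [step5]
  -- Step 6: identify each term with T k' * Q (k - k')
  refine Finset.sum_congr rfl fun k' hk' => ?_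
  rw [Finset.mem_range] at hk'
  have hcast : ((k - k' : ℕ) : ℝ) = (k : ℝ) - k' := by
    rw [Nat.cast_sub hk'.le]
  rw [hT, hQ, Finset.sum_mul]
  refine Finset.sum_congr rfl fun A hA => ?_
  rw [Finset.mem_filter] at hA
  congr 1
  refine Finset.sum_congr rfl fun C hC => ?_
  rw [hA.2, hcast]
end

section
/- Reduction lemma for general probabilistic relations: with the notation of the induced event relation, the Global-Topk probability of t in R^p equals p(t) times the probability that fewer than k of the independent events e_{C_i} (each occurring with probability Σ_{t'∈C_i, t'≻t} p(t')) occur. Formally, P^{R^p}_{k,s}(t) = p(t) · Σ_{W_e ∈ pwd(Q^p), |W_e| < k} Pr(W_e), where Q^p is the induced event relation restricted to the events e_{C_i}, C_i ≠ C_{id(t)}. -/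
open Finset

/-- Reduction lemma: the Global-Topk probability of `t` in a general
probabilistic relation equals `p(t)` times the probability that fewer than `k`
of the independent induced events `e_{C_i}` (with probabilities
`q_i = Σ_{t' ∈ C_i, t' ≻ t} p(t')`, over the parts `C_i ≠ C_{id(t)}` with
`q_i > 0`) occur. -/
theorem globalTopk_reduction_lemma {α : Type*} [DecidableEq α] (m k : ℕ)
    (C : Fin m → Finset α) (p s : α → ℝ) (R : Finset α)
    (hR : R = Finset.univ.biUnion C)
    (hdisj : ∀ i j, i ≠ j → Disjoint (C i) (C j))
    (hp : ∀ u ∈ R, p u ∈ Set.Ioc (0 : ℝ) 1)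
    (hsum : ∀ i, ∑ u ∈ C i, p u ≤ 1)
    (hs : Set.InjOn s R)
    (t : α) (i0 : Fin m) (ht : t ∈ C i0)
    (q : Fin m → ℝ)
    (hq : ∀ i, q i = ∑ u ∈ (C i).filter (fun u => s t < s u), p u) :
    (∑ W ∈ R.powerset.filter (fun W =>
        (∀ i, (W ∩ C i).card ≤ 1) ∧ t ∈ W ∧ (W.filter (fun u => s t < s u)).card < k),
      (∏ u ∈ W, p u) *
        ∏ i ∈ Finset.univ.filter (fun i => W ∩ C i = ∅), (1 - ∑ u ∈ C i, p u))
    = p t * ∑ We ∈ (Finset.univ.filter (fun i => i ≠ i0 ∧ 0 < q i)).powerset.filter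
          (fun We => We.card < k),
        (∏ i ∈ We, q i) *
          ∏ i ∈ Finset.univ.filter (fun i => i ≠ i0 ∧ 0 < q i) \ We, (1 - q i) := by
  classical
  have hCR : ∀ i, C i ⊆ R := by
    intro i u hu; rw [hR]; exact mem_biUnion.2 ⟨i, mem_univ _, hu⟩
  have htR : t ∈ R := hCR i0 ht
  have hppos : ∀ u ∈ R, 0 < p u := fun u hu => (hp u hu).1
  have hqnn : ∀ i, 0 ≤ q i := by
    intro i; rw [hq i]
    exact sum_nonneg fun u hu => le_of_lt (hppos u (hCR i (mem_filter.1 hu).1))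
  have hqpos : ∀ i, ∀ u ∈ C i, s t < s u → 0 < q i := by
    intro i u hu hsu
    rw [hq i]
    have hmem : u ∈ (C i).filter (fun u => s t < s u) := mem_filter.2 ⟨hu, hsu⟩
    exact lt_of_lt_of_le (hppos u (hCR i hu))
      (single_le_sum (fun v hv => le_of_lt (hppos v (hCR i (mem_filter.1 hv).1))) hmem)
  set O : Fin m → Finset (Option α) := fun i => insert none ((C i).image some) with hO
  set w : Fin m → Option α → ℝ := fun i o => Option.elim o (1 - ∑ u ∈ C i, p u) p with hw
  set B : Option α → Prop := fun o => Option.elim o False (fun u => s t < s u) with hB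
  set E : Finset (Fin m) := Finset.univ.filter (fun i => i ≠ i0 ∧ 0 < q i) with hE
  set G : Finset (Fin m → Option α) := (Fintype.piFinset O).filter
      (fun g => g i0 = some t ∧ (Finset.univ.filter (fun i => B (g i))).card < k) with hG
  have hOsub : ∀ i (o : Option α), o ∈ O i → o.toFinset ⊆ C i := by
    intro i o ho u hu
    cases o with
    | none => simp at hu
    | some v =>
      simp only [Option.toFinset_some, mem_singleton] at hu
      subst hu
      simp only [hO, mem_insert, mem_image, reduceCtorEq, false_or] at ho
      obtain ⟨x, hx, hxe⟩ := ho
      cases Option.some.inj hxe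
      exact hx
  -- the key correspondence lemma
  have key : ∀ (W : Finset α) (g : Fin m → Option α), W ⊆ R → (∀ i, g i ∈ O i) →
      (∀ i, W ∩ C i = (g i).toFinset) →
      W = Finset.univ.biUnion (fun i => (g i).toFinset) ∧
      (W.filter (fun u => s t < s u)).card = (Finset.univ.filter (fun i => B (g i))).card ∧
      (∏ u ∈ W, p u) * ∏ i ∈ Finset.univ.filter (fun i => W ∩ C i = ∅), (1 - ∑ u ∈ C i, p u)
        = ∏ i, w i (g i) := by
    intro W g hWR hgO hWC
    have hgC : ∀ i, (g i).toFinset ⊆ C i := fun i => hOsub i _ (hgO i)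
    have hdisj' : Set.PairwiseDisjoint (↑(Finset.univ : Finset (Fin m)))
        (fun i => (g i).toFinset) := by
      intro i _ j _ hij
      exact (hdisj i j hij).mono (hgC i) (hgC j)
    have ha : W = Finset.univ.biUnion (fun i => (g i).toFinset) := by
      ext u
      simp only [mem_biUnion, mem_univ, true_and]
      constructor
      · intro hu
        obtain ⟨i, -, hi⟩ := mem_biUnion.1 (hR ▸ hWR hu)
        exact ⟨i, (hWC i) ▸ mem_inter.2 ⟨hu, hi⟩⟩
      · rintro ⟨i, hi⟩
        have : u ∈ W ∩ C i := (hWC i).symm ▸ hi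
        exact (mem_inter.1 this).1
    refine ⟨ha, ?_, ?_⟩
    · have h1 : W.filter (fun u => s t < s u)
          = Finset.univ.biUnion (fun i => ((g i).toFinset).filter (fun u => s t < s u)) := by
        rw [ha, filter_biUnion]
      rw [h1, card_biUnion (fun i _ j hj hij =>
        disjoint_filter_filter (hdisj' (mem_univ i) hj hij)), card_filter]
      refine Finset.sum_congr rfl fun i _ => ?_
      cases hgi : g i with
      | none => simp [hB, hgi]
      | some u => by_cases hu : s t < s u <;> simp [hB, hgi, hu, filter_singleton]
    · have hprodW : ∏ u ∈ W, p u = ∏ i, ∏ u ∈ (g i).toFinset, p u := by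
        rw [ha]; exact prod_biUnion hdisj'
      have hfilter : (Finset.univ.filter (fun i => W ∩ C i = ∅))
          = Finset.univ.filter (fun i => g i = none) := by
        refine filter_congr fun i _ => ?_
        rw [hWC i]
        cases g i <;> simp
      have h2 : ∀ i, w i (g i)
          = (∏ u ∈ (g i).toFinset, p u) * (if g i = none then (1 - ∑ u ∈ C i, p u) else 1) := by
        intro i
        cases hgi : g i with
        | none => simp [hw, hgi]
        | some u => simp [hw, hgi]
      calc (∏ u ∈ W, p u) * ∏ i ∈ Finset.univ.filter (fun i => W ∩ C i = ∅),
              (1 - ∑ u ∈ C i, p u)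
          = (∏ i, ∏ u ∈ (g i).toFinset, p u)
              * ∏ i, (if g i = none then (1 - ∑ u ∈ C i, p u) else 1) := by
            rw [hprodW, hfilter, prod_filter]
        _ = ∏ i, w i (g i) := by
            rw [← prod_mul_distrib]
            exact prod_congr rfl fun i _ => (h2 i).symm
  -- the two maps
  set ψ : Finset α → (Fin m → Option α) :=
    fun W i => if h : (W ∩ C i).Nonempty then some h.choose else none with hψ
  set Φ : (Fin m → Option α) → Finset α :=
    fun g => Finset.univ.biUnion (fun i => (g i).toFinset) with hΦ
  have hψ_spec : ∀ W : Finset α, (∀ i, (W ∩ C i).card ≤ 1) →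
      ∀ i, W ∩ C i = ((ψ W) i).toFinset := by
    intro W hcard i
    by_cases h : (W ∩ C i).Nonempty
    · simp only [hψ, dif_pos h, Option.toFinset_some]
      refine Finset.eq_singleton_iff_unique_mem.2 ⟨h.choose_spec, fun x hx => ?_⟩
      exact Finset.card_le_one.1 (hcard i) x hx h.choose h.choose_spec
    · simp only [hψ, dif_neg h, Option.toFinset_none]
      exact not_nonempty_iff_eq_empty.1 h
  have hψO : ∀ W : Finset α, ∀ i, (ψ W) i ∈ O i := by
    intro W i
    simp only [hψ]
    by_cases h : (W ∩ C i).Nonempty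
    · rw [dif_pos h]
      have : h.choose ∈ W ∩ C i := h.choose_spec
      simp only [hO, mem_insert, mem_image]
      exact Or.inr ⟨h.choose, (mem_inter.1 this).2, rfl⟩
    · rw [dif_neg h]
      simp [hO]
  have hψt : ∀ W : Finset α, (∀ i, (W ∩ C i).card ≤ 1) → t ∈ W → (ψ W) i0 = some t := by
    intro W hcard htW
    have hts : t ∈ W ∩ C i0 := mem_inter.2 ⟨htW, ht⟩
    have := hψ_spec W hcard i0
    cases hgi : (ψ W) i0 with
    | none => rw [hgi, Option.toFinset_none] at this; rw [this] at hts; simp at hts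
    | some u =>
      rw [hgi, Option.toFinset_some] at this
      rw [this] at hts
      exact congrArg some (mem_singleton.1 hts).symm
  have hΦC : ∀ (g : Fin m → Option α), (∀ i, g i ∈ O i) →
      ∀ i, (Φ g) ∩ C i = (g i).toFinset := by
    intro g hg i
    ext u
    simp only [hΦ, mem_inter, mem_biUnion, mem_univ, true_and]
    constructor
    · rintro ⟨⟨j, hj⟩, hu⟩
      rcases eq_or_ne j i with rfl | hne
      · exact hj
      · exact absurd hu (Finset.disjoint_left.1 (hdisj j i hne) (hOsub j _ (hg j) hj))
    · intro hu
      exact ⟨⟨i, hu⟩, hOsub i _ (hg i) hu⟩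
  -- Step 1 : rewrite the LHS as a sum over choice functions
  have step1 : (∑ W ∈ R.powerset.filter (fun W =>
        (∀ i, (W ∩ C i).card ≤ 1) ∧ t ∈ W ∧ (W.filter (fun u => s t < s u)).card < k),
      (∏ u ∈ W, p u) *
        ∏ i ∈ Finset.univ.filter (fun i => W ∩ C i = ∅), (1 - ∑ u ∈ C i, p u))
      = ∑ g ∈ G, ∏ i, w i (g i) := by
    refine Finset.sum_nbij' ψ Φ ?_ ?_ ?_ ?_ ?_
    · intro W hW
      have hW' := mem_filter.1 hW
      have hWR := mem_powerset.1 hW'.1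
      have hcard := hW'.2.1
      have htW := hW'.2.2.1
      have hk := hW'.2.2.2
      have hk' := (key W (ψ W) hWR (hψO W) (hψ_spec W hcard)).2.1
      refine mem_filter.2 ⟨Fintype.mem_piFinset.2 (hψO W), hψt W hcard htW, ?_⟩
      rw [← hk']; exact hk
    · intro g hg
      obtain ⟨hgO, hgt, hk⟩ := mem_filter.1 hg
      have hgO' : ∀ i, g i ∈ O i := Fintype.mem_piFinset.1 hgO
      have hWC := hΦC g hgO'
      have hWR : Φ g ⊆ R := by
        intro u hu
        obtain ⟨i, -, hi⟩ := mem_biUnion.1 hu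
        exact hCR i (hOsub i _ (hgO' i) hi)
      have hcard : ∀ i, ((Φ g) ∩ C i).card ≤ 1 := by
        intro i; rw [hWC i]; cases g i <;> simp
      refine mem_filter.2 ⟨mem_powerset.2 hWR, hcard, ?_, ?_⟩
      · refine mem_biUnion.2 ⟨i0, mem_univ _, ?_⟩
        rw [hgt]; simp
      · rw [(key (Φ g) g hWR hgO' hWC).2.1]; exact hk
    · intro W hW
      have hW' := mem_filter.1 hW
      have hWR := mem_powerset.1 hW'.1
      have hcard := hW'.2.1
      exact ((key W (ψ W) hWR (hψO W) (hψ_spec W hcard)).1).symm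
    · intro g hg
      obtain ⟨hgO, hgt, hk⟩ := mem_filter.1 hg
      have hgO' : ∀ i, g i ∈ O i := Fintype.mem_piFinset.1 hgO
      have hWC := hΦC g hgO'
      funext i
      simp only [hψ]
      cases hgi : g i with
      | none =>
        have : (Φ g) ∩ C i = ∅ := by rw [hWC i, hgi, Option.toFinset_none]
        rw [dif_neg (by rw [this]; exact not_nonempty_empty)]
      | some u =>
        have hsing : (Φ g) ∩ C i = {u} := by rw [hWC i, hgi, Option.toFinset_some]
        have hne : ((Φ g) ∩ C i).Nonempty := by rw [hsing]; exact ⟨u, mem_singleton_self u⟩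
        rw [dif_pos hne]
        have hcs : hne.choose ∈ ({u} : Finset α) := by
          rw [← hsing]; exact hne.choose_spec
        exact congrArg some (mem_singleton.1 hcs)
    · intro W hW
      have hW' := mem_filter.1 hW
      have hWR := mem_powerset.1 hW'.1
      have hcard := hW'.2.1
      exact (key W (ψ W) hWR (hψO W) (hψ_spec W hcard)).2.2
  -- Step 2 : fiber the sum over the set of beating parts
  have hmaps : ∀ g ∈ G, (Finset.univ.filter (fun i => B (g i)))
      ∈ E.powerset.filter (fun S => S.card < k) := by
    intro g hg
    obtain ⟨hgO, hgt, hk⟩ := mem_filter.1 hg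
    have hgO' : ∀ i, g i ∈ O i := Fintype.mem_piFinset.1 hgO
    refine mem_filter.2 ⟨mem_powerset.2 ?_, hk⟩
    intro i hi
    have hBg : B (g i) := (mem_filter.1 hi).2
    cases hgi : g i with
    | none => rw [hgi] at hBg; simp [hB] at hBg
    | some u =>
      rw [hgi] at hBg
      have hsu : s t < s u := by simpa [hB] using hBg
      have huC : u ∈ C i := by
        have hmem := hgO' i
        rw [hgi] at hmem
        simp only [hO, mem_insert, mem_image, reduceCtorEq, false_or] at hmem
        obtain ⟨x, hx, hxe⟩ := hmem
        cases Option.some.inj hxe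
        exact hx
      have hii0 : i ≠ i0 := by
        rintro rfl
        rw [hgt] at hgi
        cases Option.some.inj hgi
        exact lt_irrefl _ hsu
      rw [hE]
      exact mem_filter.2 ⟨mem_univ i, hii0, hqpos i u huC hsu⟩
  have step2 : ∑ g ∈ G, ∏ i, w i (g i)
      = ∑ S ∈ E.powerset.filter (fun S => S.card < k),
          ∑ g ∈ G.filter (fun g => Finset.univ.filter (fun i => B (g i)) = S),
            ∏ i, w i (g i) :=
    (Finset.sum_fiberwise_of_maps_to hmaps _).symm
  -- Step 3 : compute each fiber
  have step3 : ∀ S ∈ E.powerset.filter (fun S => S.card < k),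
      ∑ g ∈ G.filter (fun g => Finset.univ.filter (fun i => B (g i)) = S),
        ∏ i, w i (g i)
      = p t * ((∏ i ∈ S, q i) * ∏ i ∈ E \ S, (1 - q i)) := by
    intro S hS
    obtain ⟨hSE, hSk⟩ := mem_filter.1 hS
    have hSE' : S ⊆ E := mem_powerset.1 hSE
    have hi0S : i0 ∉ S := by
      intro h
      have := hSE' h
      rw [hE] at this
      exact (mem_filter.1 this).2.1 rfl
    set O' : Fin m → Finset (Option α) := fun i =>
      if i = i0 then {some t}
      else if i ∈ S then (O i).filter B else (O i).filter (fun o => ¬ B o) with hO'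
    have hset : G.filter (fun g => Finset.univ.filter (fun i => B (g i)) = S)
        = Fintype.piFinset O' := by
      ext g
      simp only [hG, mem_filter, Fintype.mem_piFinset]
      constructor
      · rintro ⟨⟨hgO, hgt, hcard⟩, hbs⟩ i
        simp only [hO']
        by_cases hii : i = i0
        · subst hii; simp [hgt]
        · rw [if_neg hii]
          by_cases hiS : i ∈ S
          · rw [if_pos hiS]
            refine mem_filter.2 ⟨hgO i, ?_⟩
            rw [← hbs] at hiS
            exact (mem_filter.1 hiS).2
          · rw [if_neg hiS]
            refine mem_filter.2 ⟨hgO i, fun hBg => hiS ?_⟩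
            rw [← hbs]
            exact mem_filter.2 ⟨mem_univ i, hBg⟩
      · intro hg
        have hgt : g i0 = some t := by
          have := hg i0
          simp only [hO', if_pos rfl, mem_singleton] at this
          exact this
        have hgO : ∀ i, g i ∈ O i := by
          intro i
          have hgi := hg i
          simp only [hO'] at hgi
          by_cases hii : i = i0
          · rw [if_pos hii] at hgi
            rw [mem_singleton.1 hgi]
            subst hii
            simp only [hO, mem_insert, mem_image]
            exact Or.inr ⟨t, ht, rfl⟩
          · rw [if_neg hii] at hgi
            by_cases hiS : i ∈ S
            · exact (mem_filter.1 (by rwa [if_pos hiS] at hgi)).1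
            · exact (mem_filter.1 (by rwa [if_neg hiS] at hgi)).1
        have hbs : Finset.univ.filter (fun i => B (g i)) = S := by
          ext i
          simp only [mem_filter, mem_univ, true_and]
          constructor
          · intro hBg
            by_contra hiS
            have hgi := hg i
            simp only [hO'] at hgi
            by_cases hii : i = i0
            · subst hii
              rw [hgt] at hBg
              simp [hB] at hBg
            · rw [if_neg hii, if_neg hiS] at hgi
              exact (mem_filter.1 hgi).2 hBg
          · intro hiS
            have hgi := hg i
            have hii : i ≠ i0 := fun h => hi0S (h ▸ hiS)
            simp only [hO', if_neg hii, if_pos hiS] at hgi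
            exact (mem_filter.1 hgi).2
        exact ⟨⟨hgO, hgt, by rw [hbs]; exact hSk⟩, hbs⟩
    have hc : ∀ i, ∑ o ∈ O' i, w i o
        = if i = i0 then p t else if i ∈ S then q i else 1 - q i := by
      intro i
      by_cases hii : i = i0
      · subst hii
        simp only [hO', if_pos rfl]
        rw [sum_singleton]
        simp [hw]
      · rw [if_neg hii]
        simp only [hO', if_neg hii]
        by_cases hiS : i ∈ S
        · rw [if_pos hiS, if_pos hiS]
          have h1 : (O i).filter B = ((C i).filter (fun u => s t < s u)).image some := by
            simp only [hO]
            rw [filter_insert, if_neg (by simp [hB]), filter_image]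
            congr 1
          rw [h1, sum_image (fun x _ y _ h => Option.some.inj h), hq i]
          exact sum_congr rfl fun u hu => by simp [hw]
        · rw [if_neg hiS, if_neg hiS]
          have h1 : (O i).filter (fun o => ¬ B o)
              = insert none (((C i).filter (fun u => ¬ s t < s u)).image some) := by
            simp only [hO]
            rw [filter_insert, if_pos (by simp [hB]), filter_image]
            congr 2
          have hnone : (none : Option α)
              ∉ ((C i).filter (fun u => ¬ s t < s u)).image some := by simp
          rw [h1, sum_insert hnone, sum_image (fun x _ y _ h => Option.some.inj h)]
          have h2 : ∑ u ∈ (C i).filter (fun u => ¬ s t < s u), p u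
              = (∑ u ∈ C i, p u) - q i := by
            have h3 := sum_filter_add_sum_filter_not (C i) (fun u => s t < s u) p
            rw [hq i]
            linarith
          have h4 : ∑ u ∈ (C i).filter (fun u => ¬ s t < s u), w i (some u)
              = ∑ u ∈ (C i).filter (fun u => ¬ s t < s u), p u :=
            sum_congr rfl fun u hu => by simp [hw]
          rw [h4, h2]
          simp only [hw, Option.elim]
          ring
    rw [hset, ← Finset.prod_univ_sum]
    rw [prod_congr rfl fun i _ => hc i]
    rw [← Finset.mul_prod_erase Finset.univ _ (mem_univ i0), if_pos rfl]
    congr 1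
    have hcong : ∀ i ∈ Finset.univ.erase i0,
        (if i = i0 then p t else if i ∈ S then q i else 1 - q i)
        = (if i ∈ S then q i else 1 - q i) :=
      fun i hi => by rw [if_neg (mem_erase.1 hi).1]
    rw [prod_congr rfl hcong, prod_ite]
    congr 1
    · apply prod_congr ?_ fun _ _ => rfl
      ext i
      simp only [mem_filter, mem_erase, mem_univ, true_and, and_true]
      constructor
      · rintro ⟨-, h⟩; exact h
      · intro h; exact ⟨fun he => hi0S (he ▸ h), h⟩
    · refine (prod_subset ?_ ?_).symm
      · intro i hi
        obtain ⟨hiE, hiS⟩ := mem_sdiff.1 hi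
        refine mem_filter.2 ⟨mem_erase.2 ⟨?_, mem_univ i⟩, hiS⟩
        rw [hE] at hiE
        exact (mem_filter.1 hiE).2.1
      · intro i hi hid
        obtain ⟨hie, hiS⟩ := mem_filter.1 hi
        have hiE : i ∉ E := fun h => hid (mem_sdiff.2 ⟨h, hiS⟩)
        rw [hE] at hiE
        simp only [mem_filter, mem_univ, true_and, not_and] at hiE
        have hq0 : q i = 0 :=
          le_antisymm (not_lt.1 (hiE (mem_erase.1 hie).1)) (hqnn i)
        rw [hq0]
        ring
  -- assemble
  rw [step1, step2, Finset.mul_sum]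
  exact Finset.sum_congr rfl step3
end

section
/- In a general probabilistic relation under an injective scoring function, the Global-Topk probability of t equals the Global-Topk probability of the special tuple t_{e_t} in the induced event relation, when the induced relation is scored so that t_{e_t} has the lowest score: P^{R^p}_{k,s}(t) = P^{E^p}_{k,s^E}(t_{e_t}). -/
/-! Given that `t` is present, it is in the Global-Top`k` answer iff fewer than `k` present
tuples outscore it. Blocks are independent and the tuples of a block mutually exclusive, so
block `i` contributes at most one such tuple, with probability `q i`, the mass of its tuples
scoring above `t`. The number of tuples outscoring `t` is therefore distributed as a sum of
independent Bernoulli(`q i`) variables, which is exactly the number of present tuples other than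
`t_{e_t}` in the event relation; blocks with `q i = 0` change nothing and may be dropped. -/

open Finset

section BlockWorlds

variable {ι α R : Type*} [DecidableEq α] [CommRing R]

/- The possible worlds of an x-relation with mutually exclusive blocks `C i`, `i ∈ I`, and their
probabilities when the blocks are independent. -/
def blockWorlds (C : ι → Finset α) (I : Finset ι) : Finset (Finset α) :=
  (I.biUnion C).powerset.filter fun W => ∀ i ∈ I, (W ∩ C i).card ≤ 1

def blockWeight (C : ι → Finset α) (p : α → R) (I : Finset ι) (W : Finset α) : R :=
  (∏ u ∈ W, p u) * ∏ i ∈ I.filter (fun i => W ∩ C i = ∅), (1 - ∑ u ∈ C i, p u)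

variable {C : ι → Finset α} {I : Finset ι} {j : ι}

theorem mem_blockWorlds {W : Finset α} :
    W ∈ blockWorlds C I ↔ W ⊆ I.biUnion C ∧ ∀ i ∈ I, (W ∩ C i).card ≤ 1 := by
  rw [blockWorlds, mem_filter, mem_powerset]

theorem disjoint_of_mem_blockWorlds (hj : Disjoint (C j) (I.biUnion C)) {W : Finset α}
    (hW : W ∈ blockWorlds C I) : Disjoint W (C j) :=
  hj.symm.mono_left (mem_blockWorlds.1 hW).1

theorem notMem_of_mem_blockWorlds (hj : Disjoint (C j) (I.biUnion C)) {u : α} (hu : u ∈ C j)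
    {W : Finset α} (hW : W ∈ blockWorlds C I) : u ∉ W :=
  fun huW => disjoint_left.1 (disjoint_of_mem_blockWorlds hj hW) huW hu

variable [DecidableEq ι]

theorem blockWorlds_insert (hj : Disjoint (C j) (I.biUnion C)) :
    blockWorlds C (insert j I) =
      blockWorlds C I ∪ (C j).biUnion fun u => (blockWorlds C I).image (insert u) := by
  ext W
  simp only [mem_union, mem_biUnion, mem_image]
  constructor
  · rw [mem_blockWorlds, biUnion_insert, forall_mem_insert]
    rintro ⟨hsub, hWj, hWI⟩
    rcases Nat.le_one_iff_eq_zero_or_eq_one.1 hWj with h0 | h1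
    · left
      have hdisj : Disjoint W (C j) := disjoint_iff_inter_eq_empty.2 (card_eq_zero.1 h0)
      refine mem_blockWorlds.2 ⟨fun x hx => ?_, hWI⟩
      exact (mem_union.1 (hsub hx)).resolve_left (disjoint_left.1 hdisj hx)
    · right
      obtain ⟨u, hu⟩ := card_eq_one.1 h1
      obtain ⟨huW, huj⟩ := mem_inter.1 (hu ▸ mem_singleton_self u)
      refine ⟨u, huj, W.erase u, mem_blockWorlds.2 ⟨fun x hx => ?_, fun i hi => ?_⟩,
        insert_erase huW⟩
      · obtain ⟨hxu, hxW⟩ := mem_erase.1 hx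
        refine (mem_union.1 (hsub hxW)).resolve_left fun hxj => hxu ?_
        exact mem_singleton.1 (hu ▸ mem_inter.2 ⟨hxW, hxj⟩)
      · exact (card_le_card (inter_subset_inter_right (erase_subset u W))).trans (hWI i hi)
  · rintro (hW | ⟨u, hu, V, hV, rfl⟩)
    · have hWj := disjoint_iff_inter_eq_empty.1 (disjoint_of_mem_blockWorlds hj hW)
      rw [mem_blockWorlds] at hW ⊢
      refine ⟨hW.1.trans (biUnion_subset_biUnion_of_subset_left _ (subset_insert _ _)), ?_⟩
      rw [forall_mem_insert, hWj]
      exact ⟨by simp, hW.2⟩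
    · have hVj := disjoint_iff_inter_eq_empty.1 (disjoint_of_mem_blockWorlds hj hV)
      rw [mem_blockWorlds] at hV ⊢
      refine ⟨?_, ?_⟩
      · rw [biUnion_insert]
        exact insert_subset (mem_union_left _ hu) (hV.1.trans subset_union_right)
      rw [forall_mem_insert, insert_inter_of_mem hu, hVj]
      refine ⟨by simp, fun i hi => ?_⟩
      rw [insert_inter_of_notMem fun hui => disjoint_left.1 hj hu (mem_biUnion.2 ⟨i, hi, hui⟩)]
      exact hV.2 i hi

theorem sum_blockWorlds_insert (hj : Disjoint (C j) (I.biUnion C)) (f : Finset α → R) :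
    ∑ W ∈ blockWorlds C (insert j I), f W =
      ∑ W ∈ blockWorlds C I, f W + ∑ u ∈ C j, ∑ W ∈ blockWorlds C I, f (insert u W) := by
  rw [blockWorlds_insert hj, sum_union, sum_biUnion]
  · refine congrArg _ (sum_congr rfl fun u hu => sum_image fun V hV V' hV' h => ?_)
    rw [← erase_insert (notMem_of_mem_blockWorlds hj hu hV), h,
      erase_insert (notMem_of_mem_blockWorlds hj hu hV')]
  · intro u hu u' _ huu'
    refine disjoint_left.2 fun W hW hW' => ?_
    obtain ⟨V, -, rfl⟩ := mem_image.1 hW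
    obtain ⟨V', hV', h⟩ := mem_image.1 hW'
    have huV' : u ∈ insert u' V' := h ▸ mem_insert_self u V
    exact notMem_of_mem_blockWorlds hj hu hV' ((mem_insert.1 huV').resolve_left huu')
  · refine (disjoint_biUnion_right _ _ _).2 fun u hu => disjoint_left.2 fun W hW hW' => ?_
    obtain ⟨V, -, rfl⟩ := mem_image.1 hW'
    exact notMem_of_mem_blockWorlds hj hu hW (mem_insert_self u V)

variable (p : α → R)

theorem blockWeight_insert_of_disjoint (hjI : j ∉ I) {W : Finset α} (hW : Disjoint W (C j)) :
    blockWeight C p (insert j I) W = (1 - ∑ u ∈ C j, p u) * blockWeight C p I W := by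
  rw [blockWeight, blockWeight, filter_insert, if_pos (disjoint_iff_inter_eq_empty.1 hW),
    prod_insert (by simp [hjI])]
  ring

theorem blockWeight_insert_insert (hj : Disjoint (C j) (I.biUnion C)) {u : α} (hu : u ∈ C j)
    {W : Finset α} (hW : W ∈ blockWorlds C I) :
    blockWeight C p (insert j I) (insert u W) = p u * blockWeight C p I W := by
  have hfilter : (insert j I).filter (fun i => insert u W ∩ C i = ∅) =
      I.filter (fun i => W ∩ C i = ∅) := by
    rw [filter_insert, if_neg (by rw [insert_inter_of_mem hu]; exact insert_ne_empty _ _)]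
    refine filter_congr fun i hi => ?_
    rw [insert_inter_of_notMem fun hui => disjoint_left.1 hj hu (mem_biUnion.2 ⟨i, hi, hui⟩)]
  rw [blockWeight, blockWeight, prod_insert (notMem_of_mem_blockWorlds hj hu hW), hfilter,
    mul_assoc]

end BlockWorlds

section IndepWeight

variable {ι R : Type*} [DecidableEq ι] [CommRing R] (r : ι → R) {I D : Finset ι} {j : ι}

def indepWeight (I S : Finset ι) : R :=
  (∏ i ∈ S, r i) * ∏ i ∈ I \ S, (1 - r i)

theorem sum_powerset_insert_indepWeight (hjI : j ∉ I) (g : Finset ι → R) :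
    ∑ S ∈ (insert j I).powerset, indepWeight r (insert j I) S * g S =
      (1 - r j) * ∑ S ∈ I.powerset, indepWeight r I S * g S +
        r j * ∑ S ∈ I.powerset, indepWeight r I S * g (insert j S) := by
  rw [sum_powerset_insert hjI, mul_sum, mul_sum]
  congr 1 <;> refine sum_congr rfl fun S hS => ?_
  · have hjS : j ∉ S := fun h => hjI (mem_powerset.1 hS h)
    rw [indepWeight, indepWeight, insert_sdiff_of_notMem _ hjS,
      prod_insert fun h => hjI (mem_sdiff.1 h).1]
    ring
  · have hjS : j ∉ S := fun h => hjI (mem_powerset.1 hS h)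
    rw [indepWeight, indepWeight, prod_insert hjS, insert_sdiff_insert,
      sdiff_insert_of_notMem hjI]
    ring

theorem sum_powerset_filter_mem_indepWeight (hjD : j ∉ D) (g : Finset ι → R) :
    ∑ S ∈ (insert j D).powerset.filter (j ∈ ·), indepWeight r (insert j D) S * g (S.erase j) =
      r j * ∑ S ∈ D.powerset, indepWeight r D S * g S := by
  have h := sum_powerset_insert_indepWeight r hjD fun S => if j ∈ S then g (S.erase j) else 0
  simp only [mul_ite, mul_zero] at h
  rw [sum_filter, h, sum_eq_zero fun S hS => if_neg fun hjS => hjD (mem_powerset.1 hS hjS),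
    mul_zero, zero_add]
  refine congrArg _ (sum_congr rfl fun S hS => ?_)
  rw [if_pos (mem_insert_self j S), erase_insert fun hjS => hjD (mem_powerset.1 hS hjS)]

theorem indepWeight_congr {r' : ι → R} (h : ∀ i ∈ I, r i = r' i) {S : Finset ι} (hS : S ⊆ I) :
    indepWeight r I S = indepWeight r' I S := by
  unfold indepWeight
  rw [prod_congr rfl fun i hi => h i (hS hi),
    prod_congr rfl fun i hi => congrArg (1 - ·) (h i (mem_sdiff.1 hi).1)]

theorem sum_powerset_indepWeight_of_subset (hDI : D ⊆ I) (hr : ∀ i ∈ I \ D, r i = 0)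
    (g : Finset ι → R) :
    ∑ S ∈ D.powerset, indepWeight r D S * g S = ∑ S ∈ I.powerset, indepWeight r I S * g S := by
  have hweight : ∀ S ∈ D.powerset, indepWeight r D S = indepWeight r I S := fun S hS => by
    refine congrArg _ (prod_subset (sdiff_subset_sdiff hDI le_rfl) fun i hi hiD => ?_)
    rw [hr i (mem_sdiff.2 ⟨(mem_sdiff.1 hi).1, fun h => hiD (mem_sdiff.2 ⟨h, (mem_sdiff.1 hi).2⟩)⟩),
      sub_zero]
  rw [sum_congr rfl fun S hS => by rw [hweight S hS]]
  refine sum_subset (powerset_mono.2 hDI) fun S hSI hSD => ?_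
  obtain ⟨i, hiS, hiD⟩ := not_subset.1 fun h => hSD (mem_powerset.2 h)
  rw [indepWeight, prod_eq_zero hiS (hr i (mem_sdiff.2 ⟨mem_powerset.1 hSI hiS, hiD⟩)),
    zero_mul, zero_mul]

end IndepWeight

section HighTuples

variable {ι α R : Type*} [DecidableEq ι] [DecidableEq α] [CommRing R] {C : ι → Finset α}
  {I : Finset ι} {j : ι} (p : α → R)

theorem sum_blockWorlds_filter_mem (hj : Disjoint (C j) (I.biUnion C)) {t : α} (ht : t ∈ C j)
    (f : Finset α → R) :
    ∑ W ∈ (blockWorlds C (insert j I)).filter (t ∈ ·), blockWeight C p (insert j I) W * f W =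
      p t * ∑ W ∈ blockWorlds C I, blockWeight C p I W * f (insert t W) := by
  rw [sum_filter, sum_blockWorlds_insert hj,
    sum_eq_zero fun W hW => if_neg (notMem_of_mem_blockWorlds hj ht hW), zero_add, sum_comm,
    mul_sum]
  refine sum_congr rfl fun W hW => ?_
  rw [sum_eq_single_of_mem t ht fun u _ hut => if_neg fun htW =>
      (mem_insert.1 htW).elim (fun h => hut h.symm) (notMem_of_mem_blockWorlds hj ht hW),
    if_pos (mem_insert_self t W), blockWeight_insert_insert p hj ht hW, mul_assoc]

variable (high : α → Prop) [DecidablePred high]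

theorem card_filter_insert_of_notMem {W : Finset α} {u : α} (hu : u ∉ W) :
    ((insert u W).filter high).card = (W.filter high).card + if high u then 1 else 0 := by
  rw [filter_insert]
  split_ifs
  · exact card_insert_of_notMem fun h => hu (mem_filter.1 h).1
  · rfl

/-- Generalizing over `F` lets the induction on `I` shift `F` by one when the new block
contributes a `high` tuple. -/
theorem sum_blockWorlds_mul_card_filter (hC : (I : Set ι).PairwiseDisjoint C) (F : ℕ → R) :
    ∑ W ∈ blockWorlds C I, blockWeight C p I W * F (W.filter high).card =
      ∑ S ∈ I.powerset, indepWeight (fun i => ∑ u ∈ (C i).filter high, p u) I S * F S.card := by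
  induction I using Finset.induction_on generalizing F with
  | empty => simp [blockWorlds, blockWeight, indepWeight]
  | insert j I hjI ih =>
    set q := fun i => ∑ u ∈ (C i).filter high, p u
    rw [coe_insert] at hC
    have hj : Disjoint (C j) (I.biUnion C) := (disjoint_biUnion_right _ _ _).2 fun i hi =>
      hC (Set.mem_insert j _) (Set.mem_insert_of_mem _ hi) fun h => hjI (h ▸ hi)
    have ih' := ih (hC.subset (Set.subset_insert _ _))
    have hpresent : ∀ u ∈ C j, ∑ W ∈ blockWorlds C I, blockWeight C p (insert j I) (insert u W) *
          F ((insert u W).filter high).card =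
        p u * if high u then ∑ S ∈ I.powerset, indepWeight q I S * F (S.card + 1)
          else ∑ S ∈ I.powerset, indepWeight q I S * F S.card := by
      intro u hu
      trans p u * ∑ W ∈ blockWorlds C I,
        blockWeight C p I W * F ((W.filter high).card + if high u then 1 else 0)
      · rw [mul_sum]
        refine sum_congr rfl fun W hW => ?_
        rw [blockWeight_insert_insert p hj hu hW,
          card_filter_insert_of_notMem high (notMem_of_mem_blockWorlds hj hu hW), mul_assoc]
      · split_ifs
        · rw [← ih' fun n => F (n + 1)]
        · rw [← ih' F, sum_congr rfl fun W _ => by rw [add_zero]]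
    rw [sum_blockWorlds_insert hj, sum_congr rfl hpresent,
      sum_congr rfl fun W hW => by
        rw [blockWeight_insert_of_disjoint p hjI (disjoint_of_mem_blockWorlds hj hW), mul_assoc],
      ← mul_sum, ih', sum_powerset_insert_indepWeight q hjI,
      ← sum_filter_add_sum_filter_not (C j) high p]
    simp only [mul_ite, sum_ite, ← sum_mul]
    have hcard : ∑ S ∈ I.powerset, indepWeight q I S * F (insert j S).card =
        ∑ S ∈ I.powerset, indepWeight q I S * F (S.card + 1) :=
      sum_congr rfl fun S hS => by rw [card_insert_of_notMem fun h => hjI (mem_powerset.1 hS h)]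
    rw [hcard]
    ring

end HighTuples

theorem globalTopk_induced_event_relation_general {α : Type*} [DecidableEq α] (m k : ℕ)
    (C : Fin m → Finset α) (p s : α → ℝ) (R : Finset α)
    (hR : R = Finset.univ.biUnion C)
    (hdisj : ∀ i j, i ≠ j → Disjoint (C i) (C j))
    (hp : ∀ u ∈ R, p u ∈ Set.Ioc (0 : ℝ) 1)
    (t : α) (i0 : Fin m) (ht : t ∈ C i0)
    (q : Fin m → ℝ)
    (hq : ∀ i, q i = ∑ u ∈ (C i).filter (fun u => s t < s u), p u)
    (E : Finset (Fin m))
    (hE : E = insert i0 (Finset.univ.filter (fun i => i ≠ i0 ∧ 0 < q i)))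
    (pE : Fin m → ℝ)
    (hpE : ∀ i, pE i = if i = i0 then p t else q i) :
    (∑ W ∈ R.powerset.filter (fun W =>
        (∀ i, (W ∩ C i).card ≤ 1) ∧ t ∈ W ∧ (W.filter (fun u => s t < s u)).card < k),
      (∏ u ∈ W, p u) *
        ∏ i ∈ Finset.univ.filter (fun i => W ∩ C i = ∅), (1 - ∑ u ∈ C i, p u))
    = ∑ We ∈ E.powerset.filter (fun We => i0 ∈ We ∧ (We.erase i0).card < k),
        (∏ i ∈ We, pE i) * ∏ i ∈ E \ We, (1 - pE i) := by
  set I := univ.erase i0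
  set D := univ.filter fun i => i ≠ i0 ∧ 0 < q i
  have hI : insert i0 I = univ := insert_erase (mem_univ i0)
  have hi0 : Disjoint (C i0) (I.biUnion C) :=
    (disjoint_biUnion_right _ _ _).2 fun i hi => hdisj i0 i (mem_erase.1 hi).1.symm
  have hDI : D ⊆ I := fun i hi => mem_erase.2 ⟨(mem_filter.1 hi).2.1, mem_univ i⟩
  have hq_zero : ∀ i ∈ I \ D, q i = 0 := fun i hi => by
    have hq_nonneg : 0 ≤ q i := hq i ▸ sum_nonneg fun u hu =>
      (hp u (hR ▸ mem_biUnion.2 ⟨i, mem_univ i, (mem_filter.1 hu).1⟩)).1.le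
    obtain ⟨hiI, hiD⟩ := mem_sdiff.1 hi
    exact le_antisymm (not_lt.1 fun h => hiD (mem_filter.2 ⟨mem_univ i, (mem_erase.1 hiI).1, h⟩))
      hq_nonneg
  calc _ = ∑ W ∈ (blockWorlds C (insert i0 I)).filter (t ∈ ·), blockWeight C p (insert i0 I) W *
        if (W.filter fun u => s t < s u).card < k then 1 else 0 := by
        rw [hI, hR]
        simp only [blockWorlds, blockWeight, sum_filter, filter_filter, mem_univ, true_implies,
          mul_ite, mul_one, mul_zero, ite_and]
    _ = p t * ∑ W ∈ blockWorlds C I, blockWeight C p I W *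
        if (W.filter fun u => s t < s u).card < k then 1 else 0 := by
        simp only [sum_blockWorlds_filter_mem p hi0 ht, filter_insert, lt_self_iff_false, if_false]
    _ = p t * ∑ S ∈ D.powerset, indepWeight pE D S * if S.card < k then 1 else 0 := by
        rw [sum_blockWorlds_mul_card_filter p (fun u => s t < s u)
            (fun i _ j _ hij => hdisj i j hij) fun n => if n < k then 1 else 0,
          ← funext hq, ← sum_powerset_indepWeight_of_subset q hDI hq_zero]
        refine congrArg _ (sum_congr rfl fun S hS => ?_)
        rw [indepWeight_congr q (r' := pE) (fun i hi => by rw [hpE, if_neg (mem_filter.1 hi).2.1])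
          (mem_powerset.1 hS)]
    _ = _ := by
        have hi0D : i0 ∉ D := fun h => (mem_filter.1 h).2.1 rfl
        have hpt : pE i0 = p t := by rw [hpE, if_pos rfl]
        rw [hE, ← hpt, ← sum_powerset_filter_mem_indepWeight pE hi0D, ← filter_filter]
        simp only [sum_filter, indepWeight, mul_ite, mul_one, mul_zero]

/-- In a general probabilistic relation under an injective scoring function, the
Global-Topk probability of `t` equals the Global-Topk probability of the
special tuple `t_{e_t}` in the induced event relation (a simple relation over
the index `i0` with probability `p t` and the indices `i` with `q_i > 0`), when
the induced relation is scored so that `t_{e_t}` has the lowest score. -/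
theorem globalTopk_induced_event_relation {α : Type*} [DecidableEq α] (m k : ℕ)
    (C : Fin m → Finset α) (p s : α → ℝ) (R : Finset α)
    (hR : R = Finset.univ.biUnion C)
    (hdisj : ∀ i j, i ≠ j → Disjoint (C i) (C j))
    (hp : ∀ u ∈ R, p u ∈ Set.Ioc (0 : ℝ) 1)
    (hsum : ∀ i, ∑ u ∈ C i, p u ≤ 1)
    (hs : Set.InjOn s R)
    (t : α) (i0 : Fin m) (ht : t ∈ C i0)
    (q : Fin m → ℝ)
    (hq : ∀ i, q i = ∑ u ∈ (C i).filter (fun u => s t < s u), p u)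
    (E : Finset (Fin m))
    (hE : E = insert i0 (Finset.univ.filter (fun i => i ≠ i0 ∧ 0 < q i)))
    (pE : Fin m → ℝ)
    (hpE : ∀ i, pE i = if i = i0 then p t else q i) :
    (∑ W ∈ R.powerset.filter (fun W =>
        (∀ i, (W ∩ C i).card ≤ 1) ∧ t ∈ W ∧ (W.filter (fun u => s t < s u)).card < k),
      (∏ u ∈ W, p u) *
        ∏ i ∈ Finset.univ.filter (fun i => W ∩ C i = ∅), (1 - ∑ u ∈ C i, p u))
    = ∑ We ∈ E.powerset.filter (fun We => i0 ∈ We ∧ (We.erase i0).card < k),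
        (∏ i ∈ We, pE i) * ∏ i ∈ E \ We, (1 - pE i) :=
  globalTopk_induced_event_relation_general m k C p s R hR hdisj hp t i0 ht q hq E hE pE hpE
end

section
/- In the TA optimization setting: let R^p be a simple probabilistic relation with tuples sorted by decreasing score t_1 ≻ ... ≻ t_n, and let t be any tuple with score below that of t_i and probability p(t) ≤ p̄. Then its Global-Topk probability is bounded: P_k(t) ≤ (q(k,i)·(1−p(t_i))/p(t_i) + q(k−1,i))·p̄, where q(k,i) is the Global-Topk probability of t_i. -/
/-!
Summing over possible worlds, `P_k(t_j)` is the probability of the event "`t_j` is present and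
fewer than `k` of the tuples above it are". Since `t_1, …, t_i` all rank above `t_j`, this event
is contained in "`t_j` is present and fewer than `k` of `t_1, …, t_i` are", whose second half does
not involve `t_j`; by independence its probability is `p(t_j)` times that of
"fewer than `k` of `t_1, …, t_i` are present". Conditioning that last event on the presence of `t_i`
and toggling `t_i` (which rescales world weights by `(1 - p(t_i)) / p(t_i)`) expresses it as
`q(k,i)·(1 - p(t_i))/p(t_i) + q(k-1,i)`.
-/

open Finset

namespace SimpleProbRelation

variable {α : Type*} [DecidableEq α] (U : Finset α) (p : α → ℝ)

def worldWeight (W : Finset α) : ℝ :=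
  (∏ l ∈ W, p l) * ∏ l ∈ U \ W, (1 - p l)

def eventProb (E : Finset α → Prop) [DecidablePred E] : ℝ :=
  ∑ W ∈ U.powerset.filter E, worldWeight U p W

def globalTopkProb [LinearOrder α] (k : ℕ) (i : α) : ℝ :=
  eventProb U p fun W => i ∈ W ∧ #(W.filter (· < i)) < k

variable {U p}

theorem worldWeight_nonneg (hp : ∀ l ∈ U, p l ∈ Set.Icc (0 : ℝ) 1) {W : Finset α}
    (hW : W ⊆ U) : 0 ≤ worldWeight U p W :=
  mul_nonneg (prod_nonneg fun l hl => (hp l (hW hl)).1)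
    (prod_nonneg fun l hl => sub_nonneg.2 (hp l (mem_sdiff.1 hl).1).2)

theorem mul_worldWeight_eq_mul_worldWeight_insert {m : α} (hm : m ∈ U) {W : Finset α}
    (hmW : m ∉ W) : p m * worldWeight U p W = (1 - p m) * worldWeight U p (insert m W) := by
  have hsdiff : U \ W = insert m (U \ insert m W) := by
    rw [sdiff_insert, insert_erase (mem_sdiff.2 ⟨hm, hmW⟩)]
  rw [worldWeight, worldWeight, hsdiff, prod_insert (by simp), prod_insert hmW]
  ring

theorem eventProb_nonneg (hp : ∀ l ∈ U, p l ∈ Set.Icc (0 : ℝ) 1) (E : Finset α → Prop)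
    [DecidablePred E] : 0 ≤ eventProb U p E :=
  sum_nonneg fun _ hW => worldWeight_nonneg hp (mem_powerset.1 (mem_filter.1 hW).1)

theorem eventProb_mono (hp : ∀ l ∈ U, p l ∈ Set.Icc (0 : ℝ) 1) {E F : Finset α → Prop}
    [DecidablePred E] [DecidablePred F] (hEF : ∀ W ⊆ U, E W → F W) :
    eventProb U p E ≤ eventProb U p F := by
  refine sum_le_sum_of_subset_of_nonneg (fun W hW => ?_) fun W hW _ => ?_
  · simp only [mem_filter, mem_powerset] at hW ⊢
    exact ⟨hW.1, hEF W hW.1 hW.2⟩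
  · exact worldWeight_nonneg hp (mem_powerset.1 (mem_filter.1 hW).1)

theorem eventProb_congr {E F : Finset α → Prop} [DecidablePred E] [DecidablePred F]
    (hEF : ∀ W ⊆ U, E W ↔ F W) : eventProb U p E = eventProb U p F :=
  sum_congr (filter_congr fun W hW => hEF W (mem_powerset.1 hW)) fun _ _ => rfl

theorem eventProb_eq_mem_and_add_notMem_and (E : Finset α → Prop) [DecidablePred E] (m : α) :
    eventProb U p E =
      eventProb U p (fun W => m ∈ W ∧ E W) + eventProb U p (fun W => m ∉ W ∧ E W) := by
  rw [eventProb, ← sum_filter_add_sum_filter_not _ (m ∈ ·), filter_filter, filter_filter]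
  congr 1 <;> exact sum_congr (filter_congr fun _ _ => and_comm) fun _ _ => rfl

theorem mul_eventProb_notMem_and {m : α} (hm : m ∈ U) (E : Finset α → Prop) [DecidablePred E]
    (hE : ∀ W, E (insert m W) ↔ E W) :
    p m * eventProb U p (fun W => m ∉ W ∧ E W) =
      (1 - p m) * eventProb U p (fun W => m ∈ W ∧ E W) := by
  simp only [eventProb, mul_sum]
  refine sum_bij' (fun W _ => insert m W) (fun W _ => W.erase m) (fun W hW => ?_)
    (fun W hW => ?_) (fun W hW => ?_) (fun W hW => ?_) (fun W hW => ?_) <;>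
    simp only [mem_filter, mem_powerset] at hW ⊢
  · exact ⟨insert_subset hm hW.1, mem_insert_self m W, (hE W).2 hW.2.2⟩
  · refine ⟨(erase_subset m W).trans hW.1, notMem_erase m W, ?_⟩
    rw [← hE, insert_erase hW.2.1]
    exact hW.2.2
  · exact erase_insert hW.2.1
  · exact insert_erase hW.2.1
  · exact mul_worldWeight_eq_mul_worldWeight_insert hm hW.2.1

theorem eventProb_mem_and {m : α} (hm : m ∈ U) (E : Finset α → Prop) [DecidablePred E]
    (hE : ∀ W, E (insert m W) ↔ E W) :
    eventProb U p (fun W => m ∈ W ∧ E W) = p m * eventProb U p E := by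
  rw [eventProb_eq_mem_and_add_notMem_and E m, mul_add, mul_eventProb_notMem_and hm E hE]
  ring

section LinearOrder

variable [LinearOrder α]

theorem eventProb_card_filter_le_lt_eq {i : α} (hi : i ∈ U) (hpi : p i ≠ 0) (k : ℕ) :
    eventProb U p (fun W => #(W.filter (· ≤ i)) < k) =
      globalTopkProb U p k i * (1 - p i) / p i + globalTopkProb U p (k - 1) i := by
  have hnot : eventProb U p (fun W => i ∉ W ∧ #(W.filter (· ≤ i)) < k) =
      eventProb U p (fun W => i ∉ W ∧ #(W.filter (· < i)) < k) := by
    refine eventProb_congr fun W _ => and_congr_right fun hiW => ?_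
    rw [filter_congr fun l hl => (ne_of_mem_of_not_mem hl hiW).le_iff_lt]
  have hmem : eventProb U p (fun W => i ∈ W ∧ #(W.filter (· ≤ i)) < k) =
      globalTopkProb U p (k - 1) i := by
    refine eventProb_congr fun W _ => and_congr_right fun hiW => ?_
    have hsplit : W.filter (· ≤ i) = insert i (W.filter (· < i)) := by
      ext l
      simp only [mem_filter, mem_insert]
      grind
    rw [hsplit, card_insert_of_notMem (by simp)]
    omega
  have htoggle := mul_eventProb_notMem_and (p := p) hi (fun W => #(W.filter (· < i)) < k)
    fun W => by rw [filter_insert, if_neg (lt_irrefl i)]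
  rw [eventProb_eq_mem_and_add_notMem_and _ i, hmem, hnot, add_comm, add_left_inj, eq_div_iff hpi]
  exact (mul_comm _ _).trans (htoggle.trans (mul_comm _ _))

theorem globalTopkProb_le_mul (hp : ∀ l ∈ U, p l ∈ Set.Icc (0 : ℝ) 1) (k : ℕ) {i j : α}
    (hij : i < j) (hj : j ∈ U) :
    globalTopkProb U p k j ≤ p j * eventProb U p (fun W => #(W.filter (· ≤ i)) < k) := by
  rw [← eventProb_mem_and hj _ fun W => by rw [filter_insert, if_neg hij.not_ge]]
  refine eventProb_mono hp fun W _ hW => ⟨hW.1, lt_of_le_of_lt (card_le_card ?_) hW.2⟩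
  intro l hl
  simp only [mem_filter] at hl ⊢
  exact ⟨hl.1, hl.2.trans_lt hij⟩

end LinearOrder

end SimpleProbRelation

open SimpleProbRelation

theorem ta_threshold_bound_general (n : ℕ) (p : ℕ → ℝ)
    (hp : ∀ l ∈ Finset.Icc 1 n, p l ∈ Set.Ioc (0 : ℝ) 1)
    (q : ℕ → ℕ → ℝ)
    (hq : ∀ k i, q k i =
      ∑ W ∈ (Finset.Icc 1 n).powerset.filter
          (fun W => i ∈ W ∧ (W.filter (fun l => l < i)).card < k),
        (∏ l ∈ W, p l) * ∏ l ∈ Finset.Icc 1 n \ W, (1 - p l))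
    (k i j : ℕ) (hi : 1 ≤ i) (hij : i < j) (hj : j ≤ n)
    (pbar : ℝ) (hpbar : p j ≤ pbar) :
    q k j ≤ (q k i * (1 - p i) / p i + q (k - 1) i) * pbar := by
  have hq' : ∀ k i, q k i = globalTopkProb (Finset.Icc 1 n) p k i := hq
  have hp' : ∀ l ∈ Finset.Icc 1 n, p l ∈ Set.Icc (0 : ℝ) 1 :=
    fun l hl => Set.Ioc_subset_Icc_self (hp l hl)
  have hiU : i ∈ Finset.Icc 1 n := Finset.mem_Icc.2 ⟨hi, hij.le.trans hj⟩
  have hjU : j ∈ Finset.Icc 1 n := Finset.mem_Icc.2 ⟨hi.trans hij.le, hj⟩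
  rw [hq', hq', hq', ← eventProb_card_filter_le_lt_eq hiU (hp i hiU).1.ne']
  calc globalTopkProb (Finset.Icc 1 n) p k j
      ≤ p j * eventProb (Finset.Icc 1 n) p (fun W => #(W.filter (· ≤ i)) < k) :=
        globalTopkProb_le_mul hp' k hij hjU
    _ ≤ _ := by rw [mul_comm]; exact mul_le_mul_of_nonneg_left hpbar (eventProb_nonneg hp' _)

/-- TA threshold bound: in a simple probabilistic relation with tuples sorted by
decreasing score, any tuple `t` (of index `j`) with score below that of `t_i`
and probability at most `p̄` has Global-Topk probability bounded by
`(q(k,i)·(1-p tᵢ)/p tᵢ + q(k-1,i)) · p̄`. -/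
theorem ta_threshold_bound (n : ℕ) (p : ℕ → ℝ)
    (hp : ∀ l ∈ Finset.Icc 1 n, p l ∈ Set.Ioc (0 : ℝ) 1)
    (q : ℕ → ℕ → ℝ)
    (hq : ∀ k i, q k i =
      ∑ W ∈ (Finset.Icc 1 n).powerset.filter
          (fun W => i ∈ W ∧ (W.filter (fun l => l < i)).card < k),
        (∏ l ∈ W, p l) * ∏ l ∈ Finset.Icc 1 n \ W, (1 - p l))
    (k i j : ℕ) (hk : 1 ≤ k) (hi : 1 ≤ i) (hij : i < j) (hj : j ≤ n)
    (pbar : ℝ) (hpbar : p j ≤ pbar) :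
    q k j ≤ (q k i * (1 - p i) / p i + q (k - 1) i) * pbar :=
  ta_threshold_bound_general n p hp q hq k i j hi hij hj pbar hpbar
end

section
/- Global-Topk satisfies Stability for score increase in simple probabilistic relations under injective scoring functions: if the score of tuple t is raised (preserving injectivity) so that t moves earlier or stays in the sorted order, then the Global-Topk probability of t does not decrease, and the Global-Topk probability of every other tuple does not increase. -/
open Finset

/-- Stability for score increase in a simple probabilistic relation: raising the
score of tuple `t0` (the new scoring `s'` is injective and agrees with `s`
elsewhere) does not decrease `t0`'s Global-Topk probability and does not
increase the Global-Topk probability of any other tuple. -/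
theorem globalTopk_stability_score_increase {α : Type*} [DecidableEq α]
    (R : Finset α) (p : α → ℝ)
    (hp : ∀ t ∈ R, p t ∈ Set.Ioc (0 : ℝ) 1)
    (s s' : α → ℝ)
    (hs : Set.InjOn s R) (hs' : Set.InjOn s' R)
    (t0 : α) (ht0 : t0 ∈ R)
    (hraise : s t0 < s' t0)
    (hagree : ∀ t ∈ R, t ≠ t0 → s' t = s t)
    (k : ℕ)
    (P : (α → ℝ) → α → ℝ)
    (hP : ∀ sc t, P sc t =
      ∑ W ∈ R.powerset.filter
          (fun W => t ∈ W ∧ (W.filter (fun t' => sc t < sc t')).card < k),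
        (∏ u ∈ W, p u) * ∏ u ∈ R \ W, (1 - p u)) :
    P s t0 ≤ P s' t0 ∧ ∀ t ∈ R, t ≠ t0 → P s' t ≤ P s t := by
  have hnonneg : ∀ W ∈ R.powerset,
      0 ≤ (∏ u ∈ W, p u) * ∏ u ∈ R \ W, (1 - p u) := by
    intro W hW
    rw [mem_powerset] at hW
    apply mul_nonneg
    · exact Finset.prod_nonneg fun u hu => le_of_lt (hp u (hW hu)).1
    · exact Finset.prod_nonneg fun u hu => by
        have := (hp u (mem_sdiff.mp hu).1).2; linarith
  constructor
  · rw [hP, hP]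
    apply Finset.sum_le_sum_of_subset_of_nonneg
    · intro W hW
      rw [mem_filter, mem_powerset] at hW ⊢
      obtain ⟨hWR, htW, hcard⟩ := hW
      refine ⟨hWR, htW, lt_of_le_of_lt ?_ hcard⟩
      apply Finset.card_le_card
      intro t' ht'
      rw [mem_filter] at ht' ⊢
      obtain ⟨ht'W, hlt⟩ := ht'
      have ht'R := hWR ht'W
      have ht'ne : t' ≠ t0 := by
        rintro rfl; exact lt_irrefl _ hlt
      refine ⟨ht'W, ?_⟩
      rw [hagree t' ht'R ht'ne] at hlt
      linarith
    · intro W hW _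
      rw [mem_filter] at hW
      exact hnonneg W hW.1
  · intro t htR htne
    rw [hP, hP]
    apply Finset.sum_le_sum_of_subset_of_nonneg
    · intro W hW
      rw [mem_filter, mem_powerset] at hW ⊢
      obtain ⟨hWR, htW, hcard⟩ := hW
      refine ⟨hWR, htW, lt_of_le_of_lt ?_ hcard⟩
      apply Finset.card_le_card
      intro t' ht'
      rw [mem_filter] at ht' ⊢
      obtain ⟨ht'W, hlt⟩ := ht'
      have ht'R := hWR ht'W
      refine ⟨ht'W, ?_⟩
      rw [hagree t htR htne]
      by_cases h : t' = t0
      · subst h; linarith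
      · rw [hagree t' ht'R h]; exact hlt
    · intro W hW _
      rw [mem_filter] at hW
      exact hnonneg W hW.1
end

section
/- Equal allocation coefficients as expected membership: in a world W with ties, if a top-k answer set is chosen uniformly at random among all valid top-k answer sets of W (sets of size min(k,|W|) containing all tuples strictly better than some member and, among tying tuples at the boundary, any choice), then the probability that t is in the chosen set equals α(t, W) = min(1, (k−a)/b) when a < k (with a, b as before), and 0 otherwise. -/
/-!
Every valid answer set `S` of size `m` is nested with every upper set `U` of the scores in `W`:
`U ⊆ S` when `|U| ≤ m`, and `S ⊆ U` when `m ≤ |U|`. Apply this to the upper sets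
`A = {s > s t}` and `A ∪ B = {s ≥ s t}`, where `B` is the tie class of `t`. If `k ≤ a`, then
`t` lies in no valid set; if `a + b < k`, it lies in all of them. Otherwise the valid sets are
exactly the sets `A ∪ T` with `T` a `(k - a)`-subset of `B`, and `t` lies in
`C(b - 1, k - a - 1)` of the `C(b, k - a)` of them.
-/

open Finset

section PowersetCard

variable {α : Type*} [DecidableEq α]

lemma filter_mem_powersetCard_succ {B : Finset α} {t : α} (ht : t ∈ B) (j : ℕ) :
    {T ∈ B.powersetCard (j + 1) | t ∈ T} = ((B.erase t).powersetCard j).image (insert t) := by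
  rw [← insert_erase ht, powersetCard_succ_insert (notMem_erase t B), filter_union,
    filter_false_of_mem, filter_true_of_mem, empty_union, erase_insert (notMem_erase t B)]
  · simp only [mem_image]
    rintro _ ⟨T, -, rfl⟩
    exact mem_insert_self t T
  · exact fun T hT htT => notMem_erase t B ((mem_powersetCard.1 hT).1 htT)

lemma card_filter_mem_powersetCard_succ {B : Finset α} {t : α} (ht : t ∈ B) (j : ℕ) :
    #{T ∈ B.powersetCard (j + 1) | t ∈ T} = (#B - 1).choose j := by
  rw [filter_mem_powersetCard_succ ht, card_image_of_injOn, card_powersetCard,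
    card_erase_of_mem ht]
  intro T₁ h₁ T₂ h₂ h
  have ht₁ : t ∉ T₁ := fun h' => notMem_erase t B ((mem_powersetCard.1 h₁).1 h')
  have ht₂ : t ∉ T₂ := fun h' => notMem_erase t B ((mem_powersetCard.1 h₂).1 h')
  rw [← erase_insert ht₁, ← erase_insert ht₂]
  exact congrArg (·.erase t) h

lemma card_filter_mem_powersetCard_div {B : Finset α} {t : α} (ht : t ∈ B) {j : ℕ}
    (hj : j ≤ #B) :
    (#{T ∈ B.powersetCard j | t ∈ T} : ℝ) / #(B.powersetCard j) = j / #B := by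
  obtain _ | j := j
  · simp
  obtain ⟨n, hn⟩ := Nat.exists_eq_add_one_of_ne_zero (card_pos.2 ⟨t, ht⟩).ne'
  rw [card_filter_mem_powersetCard_succ ht, card_powersetCard, hn, Nat.add_sub_cancel,
    div_eq_div_iff (by exact_mod_cast (Nat.choose_pos (hn ▸ hj)).ne') (by positivity)]
  have key : ((n + 1) * n.choose j : ℝ) = (n + 1).choose (j + 1) * (j + 1) := by
    exact_mod_cast Nat.add_one_mul_choose_eq n j
  push_cast
  linarith

end PowersetCard

section UpperSets

variable {α β : Type*} [LinearOrder β]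

def IsUpperIn (W : Finset α) (s : α → β) (U : Finset α) : Prop :=
  U ⊆ W ∧ ∀ x ∈ U, ∀ y ∈ W, s x ≤ s y → y ∈ U

lemma isUpperIn_filter_lt (W : Finset α) (s : α → β) (c : β) :
    IsUpperIn W s {y ∈ W | c < s y} :=
  ⟨filter_subset _ _, fun _ hx _ hy hxy =>
    mem_filter.2 ⟨hy, (mem_filter.1 hx).2.trans_le hxy⟩⟩

lemma isUpperIn_filter_le (W : Finset α) (s : α → β) (c : β) :
    IsUpperIn W s {y ∈ W | c ≤ s y} :=
  ⟨filter_subset _ _, fun _ hx _ hy hxy =>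
    mem_filter.2 ⟨hy, (mem_filter.1 hx).2.trans hxy⟩⟩

lemma disjoint_filter_lt_filter_eq (W : Finset α) (s : α → β) (c : β) :
    Disjoint {y ∈ W | c < s y} {y ∈ W | s y = c} :=
  disjoint_filter.2 fun _ _ hlt heq => hlt.ne' heq

end UpperSets

section TopSets

variable {α β : Type*} [DecidableEq α] [LinearOrder β]
  {W S U : Finset α} {s : α → β} {m : ℕ}

def topSets (W : Finset α) (s : α → β) (m : ℕ) : Finset (Finset α) :=
  W.powerset.filter fun S => #S = m ∧ ∀ t1 ∈ S, ∀ t2 ∈ W \ S, s t2 ≤ s t1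

lemma mem_topSets :
    S ∈ topSets W s m ↔ S ⊆ W ∧ #S = m ∧ ∀ x ∈ S, ∀ y ∈ W \ S, s y ≤ s x := by
  rw [topSets, mem_filter, mem_powerset]

lemma topSets_nonempty (hm : m ≤ #W) : (topSets W s m).Nonempty := by
  induction m with
  | zero => exact ⟨∅, mem_topSets.2 ⟨empty_subset W, card_empty, by simp⟩⟩
  | succ m ih =>
    obtain ⟨S, hS⟩ := ih (Nat.le_of_succ_le hm)
    obtain ⟨hSW, hcard, hS⟩ := mem_topSets.1 hS
    have hne : (W \ S).Nonempty := by
      rw [← card_pos, card_sdiff_of_subset hSW]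
      omega
    obtain ⟨x, hx, hmax⟩ := exists_max_image (W \ S) s hne
    have hxS : x ∉ S := (mem_sdiff.1 hx).2
    refine ⟨insert x S, mem_topSets.2 ⟨insert_subset (mem_sdiff.1 hx).1 hSW, ?_, ?_⟩⟩
    · rw [card_insert_of_notMem hxS, hcard]
    · intro y hy z hz
      have hz' : z ∈ W \ S := sdiff_subset_sdiff le_rfl (subset_insert x S) hz
      rcases mem_insert.1 hy with rfl | hy
      · exact hmax z hz'
      · exact hS y hy z hz'

lemma IsUpperIn.subset_of_card_le (hU : IsUpperIn W s U) (hS : S ∈ topSets W s m)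
    (hm : #U ≤ m) : U ⊆ S := by
  intro x hx
  by_contra hxS
  obtain ⟨hSW, hcard, hS⟩ := mem_topSets.1 hS
  have hsub : S ⊆ U.erase x := fun y hy =>
    mem_erase.2 ⟨ne_of_mem_of_not_mem hy hxS,
      hU.2 x hx y (hSW hy) (hS y hy x (mem_sdiff.2 ⟨hU.1 hx, hxS⟩))⟩
  have := card_le_card hsub
  rw [card_erase_of_mem hx] at this
  have := card_pos.2 ⟨x, hx⟩
  omega

lemma IsUpperIn.subset_of_le_card (hU : IsUpperIn W s U) (hS : S ∈ topSets W s m)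
    (hm : m ≤ #U) : S ⊆ U := by
  intro y hy
  by_contra hyU
  obtain ⟨hSW, hcard, hS⟩ := mem_topSets.1 hS
  have hsub : insert y U ⊆ S := insert_subset hy fun u hu => by
    by_contra huS
    exact hyU (hU.2 u hu y (hSW hy) (hS y hy u (mem_sdiff.2 ⟨hU.1 hu, huS⟩)))
  have := card_le_card hsub
  rw [card_insert_of_notMem hyU] at this
  omega

lemma card_filter_le_eq_add (W : Finset α) (s : α → β) (c : β) :
    #{y ∈ W | c ≤ s y} = #{y ∈ W | c < s y} + #{y ∈ W | s y = c} := by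
  rw [← card_union_of_disjoint (disjoint_filter_lt_filter_eq W s c), ← filter_or]
  congr 1
  exact filter_congr fun y _ => by rw [le_iff_lt_or_eq, eq_comm]

lemma topSets_eq_image {c : β} (ha : #{y ∈ W | c < s y} ≤ m)
    (hb : m ≤ #{y ∈ W | c < s y} + #{y ∈ W | s y = c}) :
    topSets W s m = ({y ∈ W | s y = c}.powersetCard (m - #{y ∈ W | c < s y})).image
      ({y ∈ W | c < s y} ∪ ·) := by
  rw [← card_filter_le_eq_add] at hb
  ext S
  rw [mem_image]
  constructor
  · intro hS
    have hAS := (isUpperIn_filter_lt W s c).subset_of_card_le hS ha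
    have hSle := (isUpperIn_filter_le W s c).subset_of_le_card hS hb
    refine ⟨S \ {y ∈ W | c < s y}, mem_powersetCard.2 ⟨fun y hy => ?_, ?_⟩,
      union_sdiff_of_subset hAS⟩
    · obtain ⟨hyS, hyA⟩ := mem_sdiff.1 hy
      obtain ⟨hyW, hcy⟩ := mem_filter.1 (hSle hyS)
      have hcy' : ¬c < s y := fun h => hyA (mem_filter.2 ⟨hyW, h⟩)
      exact mem_filter.2 ⟨hyW, (hcy.lt_or_eq.resolve_left hcy').symm⟩
    · rw [card_sdiff_of_subset hAS, (mem_topSets.1 hS).2.1]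
  · rintro ⟨T, hT, rfl⟩
    obtain ⟨hTB, hTcard⟩ := mem_powersetCard.1 hT
    refine mem_topSets.2
      ⟨union_subset (filter_subset _ _) (hTB.trans (filter_subset _ _)), ?_, ?_⟩
    · rw [card_union_of_disjoint ((disjoint_filter_lt_filter_eq W s c).mono_right hTB), hTcard]
      omega
    · intro x hx y hy
      have hcx : c ≤ s x := by
        rcases mem_union.1 hx with hx | hx
        · exact (mem_filter.1 hx).2.le
        · exact (mem_filter.1 (hTB hx)).2.ge
      obtain ⟨hyW, hyAT⟩ := mem_sdiff.1 hy
      exact (not_lt.1 fun h => hyAT (mem_union_left _ (mem_filter.2 ⟨hyW, h⟩))).trans hcx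

lemma card_filter_mem_topSets_div {t : α} (ht : t ∈ W) (ha : #{y ∈ W | s t < s y} ≤ m)
    (hb : m ≤ #{y ∈ W | s t < s y} + #{y ∈ W | s y = s t}) :
    (#{S ∈ topSets W s m | t ∈ S} : ℝ) / #(topSets W s m) =
      ((m : ℝ) - #{y ∈ W | s t < s y}) / #{y ∈ W | s y = s t} := by
  set A := {y ∈ W | s t < s y}
  set B := {y ∈ W | s y = s t}
  have hAB : Disjoint A B := disjoint_filter_lt_filter_eq W s (s t)
  have hinj : Set.InjOn (A ∪ ·) (B.powersetCard (m - #A)) :=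
    fun T₁ h₁ T₂ h₂ (h : A ∪ T₁ = A ∪ T₂) => by
      rw [← union_sdiff_cancel_left (hAB.mono_right (mem_powersetCard.1 h₁).1), h,
        union_sdiff_cancel_left (hAB.mono_right (mem_powersetCard.1 h₂).1)]
  have htA : t ∉ A := fun h => (mem_filter.1 h).2.false
  rw [topSets_eq_image ha hb, filter_image, card_image_of_injOn hinj,
    card_image_of_injOn (hinj.mono (coe_subset.2 (filter_subset _ _))),
    filter_congr fun T _ => by rw [mem_union, or_iff_right htA],
    card_filter_mem_powersetCard_div (show t ∈ B from mem_filter.2 ⟨ht, rfl⟩)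
      (by omega), Nat.cast_sub ha]

end TopSets

/-- Equal allocation coefficients as expected membership: if a top-k answer set
of a world `W` is chosen uniformly at random among all valid top-k answer sets
(subsets `S ⊆ W` of size `min(k,|W|)` such that every excluded tuple scores no
higher than every included tuple), then the probability that `t ∈ W` is in the
chosen set equals `min(1, (k-a)/b)` when `a < k` and `0` otherwise, where `a`
counts the tuples of `W` strictly better than `t` and `b` the tuples tying
with `t` (including `t`). -/
theorem equal_allocation_uniform_membership {α : Type*} [DecidableEq α]
    (W : Finset α) (s : α → ℝ) (k : ℕ) (t : α) (ht : t ∈ W) :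
    (((W.powerset.filter (fun S => S.card = min k W.card ∧
          ∀ t1 ∈ S, ∀ t2 ∈ W \ S, s t2 ≤ s t1)).filter (fun S => t ∈ S)).card : ℝ) /
      ((W.powerset.filter (fun S => S.card = min k W.card ∧
          ∀ t1 ∈ S, ∀ t2 ∈ W \ S, s t2 ≤ s t1)).card : ℝ)
    = if (W.filter (fun t' => s t < s t')).card < k
      then min 1 (((k : ℝ) - (W.filter (fun t' => s t < s t')).card) /
          (W.filter (fun t' => s t' = s t)).card)
      else 0 := by
  change (#{S ∈ topSets W s (min k #W) | t ∈ S} : ℝ) / #(topSets W s (min k #W)) = _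
  set A := {y ∈ W | s t < s y}
  set B := {y ∈ W | s y = s t}
  have htB : t ∈ B := mem_filter.2 ⟨ht, rfl⟩
  have hB : (0 : ℝ) < #B := by exact_mod_cast card_pos.2 ⟨t, htB⟩
  have hAB : #{y ∈ W | s t ≤ s y} = #A + #B := card_filter_le_eq_add W s (s t)
  split_ifs with hak
  · rcases le_or_gt k (#A + #B) with hkab | hkab
    · rw [min_eq_left (hkab.trans (hAB ▸ card_filter_le W _)),
        card_filter_mem_topSets_div ht hak.le hkab,
        min_eq_right ((div_le_one hB).2 (sub_le_iff_le_add'.2 (by exact_mod_cast hkab)))]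
    · have htS : ∀ S ∈ topSets W s (min k #W), t ∈ S := fun S hS =>
        (isUpperIn_filter_le W s (s t)).subset_of_card_le hS
          (le_min (hAB.trans_le hkab.le) (card_filter_le W _))
          (mem_filter.2 ⟨ht, le_rfl⟩)
      have hF : (0 : ℝ) < #(topSets W s (min k #W)) := by
        exact_mod_cast (topSets_nonempty (min_le_right k #W)).card_pos
      rw [filter_true_of_mem htS, div_self hF.ne',
        min_eq_left ((one_le_div hB).2 (le_sub_iff_add_le'.2 (by exact_mod_cast hkab.le)))]
  · have htS : ∀ S ∈ topSets W s (min k #W), t ∉ S := fun S hS hmem =>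
      (mem_filter.1 ((isUpperIn_filter_lt W s (s t)).subset_of_le_card hS
        ((min_le_left k #W).trans (not_lt.1 hak)) hmem)).2.false
    rw [filter_false_of_mem htS, card_empty, Nat.cast_zero, zero_div]
end
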